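/- arXiv:1512.08976 — 9 statements merged into one kernel-verified Lean document; each statement's English description precedes it below -/
import Mathlib

section
/- Let a, b ∈ A and 0 < λ ∈ ℝ. Then: (i) −λ ≤ a ≤ λ if and only if a² ≤ λ²; (ii) ‖a²‖ = ‖a‖²; (iii) if 0 ≤ a and 0 ≤ b then ‖a − b‖ ≤ max{‖a‖, ‖b‖}; (iv) ‖a∘b‖ ≤ ‖a‖·‖b‖, where a∘b := ½(ab + ba); (v) if aCb then ‖ab‖ ≤ ‖a‖·‖b‖. -/
/-- A synaptic algebra: a real vector subspace `carrier` of a unital associative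
real algebra `R`, containing `1`, equipped with a positive cone `Pos` making it a
partially ordered archimedean real vector space with order unit `1`, and
satisfying conditions [SA2]–[SA9]. The partial order is `a ≤ b ↔ b - a ∈ Pos`. -/
structure SynapticAlgebra (R : Type*) [Ring R] [Algebra ℝ R] where
  carrier : Set R
  one_mem : (1 : R) ∈ carrier
  add_mem : ∀ {a b : R}, a ∈ carrier → b ∈ carrier → a + b ∈ carrier
  smul_mem : ∀ (t : ℝ) {a : R}, a ∈ carrier → t • a ∈ carrier
  neg_mem : ∀ {a : R}, a ∈ carrier → -a ∈ carrier
  Pos : Set R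
  pos_subset : Pos ⊆ carrier
  pos_add : ∀ {a b : R}, a ∈ Pos → b ∈ Pos → a + b ∈ Pos
  pos_smul : ∀ {t : ℝ}, 0 ≤ t → ∀ {a : R}, a ∈ Pos → t • a ∈ Pos
  pos_antisymm : ∀ {a : R}, a ∈ Pos → -a ∈ Pos → a = 0
  arch : ∀ {a b : R}, a ∈ carrier → b ∈ carrier →
    (∀ n : ℕ, b - (n : ℝ) • a ∈ Pos) → -a ∈ Pos
  one_pos : (1 : R) ∈ Pos
  orderUnit : ∀ {a : R}, a ∈ carrier → ∃ n : ℕ, (n : ℝ) • (1 : R) - a ∈ Pos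
  SA2 : ∀ {a b : R}, a ∈ Pos → b ∈ Pos → a * b = b * a → a * b ∈ Pos
  SA3 : ∀ {a : R}, a ∈ carrier → a * a ∈ Pos
  SA4 : ∀ {a b : R}, a ∈ Pos → b ∈ Pos → a * b * a ∈ Pos
  SA5 : ∀ {a b : R}, a ∈ carrier → b ∈ Pos → a * b * a = 0 → a * b = 0 ∧ b * a = 0
  SA6 : ∀ {a : R}, a ∈ Pos →
    ∃ b : R, b ∈ Pos ∧ (∀ c ∈ carrier, c * a = a * c → c * b = b * c) ∧ b * b = a
  SA7 : ∀ {a : R}, a ∈ carrier →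
    ∃ p : R, p ∈ carrier ∧ p * p = p ∧ ∀ b ∈ carrier, (a * b = 0 ↔ p * b = 0)
  SA8 : ∀ {a : R}, a ∈ carrier → a - 1 ∈ Pos → ∃ b ∈ carrier, a * b = 1 ∧ b * a = 1
  SA9 : ∀ {a b : R}, a ∈ carrier → b ∈ carrier → ∀ s : ℕ → R,
    (∀ n, s n ∈ carrier) → (∀ n, s (n + 1) - s n ∈ Pos) →
    (∀ m n, s m * s n = s n * s m) → (∀ n, s n * b = b * s n) →
    (∀ ε : ℝ, 0 < ε →
      ∃ N : ℕ, ∀ n ≥ N, (a - s n) - (-ε) • (1 : R) ∈ Pos ∧ ε • (1 : R) - (a - s n) ∈ Pos) →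
    a * b = b * a

namespace SynapticAlgebra

variable {R : Type*} [Ring R] [Algebra ℝ R]

/-- The partial order of the synaptic algebra: `a ≤ b` iff `b - a` is in the positive cone. -/
def le (S : SynapticAlgebra R) (a b : R) : Prop := b - a ∈ S.Pos

/-- The identification of a real number `t` with the element `t·1` of the algebra. -/
def scal (_ : SynapticAlgebra R) (t : ℝ) : R := t • (1 : R)

/-- The order-unit norm: `‖a‖ = inf {t : ℝ | 0 < t ∧ -t·1 ≤ a ≤ t·1}`. -/
noncomputable def nrm (S : SynapticAlgebra R) (a : R) : ℝ :=
  sInf {t : ℝ | 0 < t ∧ S.le (S.scal (-t)) a ∧ S.le a (S.scal t)}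

/-- `p` is a projection: an idempotent element of the algebra. -/
def IsProj (S : SynapticAlgebra R) (p : R) : Prop := p ∈ S.carrier ∧ p * p = p

/-- `e` is an effect: an element with `0 ≤ e ≤ 1`. -/
def IsEff (S : SynapticAlgebra R) (e : R) : Prop := e ∈ S.carrier ∧ S.le 0 e ∧ S.le e 1

/-- `b ∈ CC(a)`: `b` is in the algebra and commutes with every element of the
algebra that commutes with `a` (the double commutant of `a`). -/
def inCC (S : SynapticAlgebra R) (a b : R) : Prop :=
  b ∈ S.carrier ∧ ∀ c ∈ S.carrier, c * a = a * c → c * b = b * c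

/-- The square root of a positive element (chosen via [SA6]; it is unique). -/
noncomputable def sqrt (S : SynapticAlgebra R) (a : R) : R :=
  @dite R (a ∈ S.Pos) (Classical.dec _) (fun h => Classical.choose (S.SA6 h)) (fun _ => 0)

/-- The carrier projection `a°` of `a` (chosen via [SA7]; it is unique):
the projection `p` such that for all `b` in the algebra, `ab = 0 ↔ pb = 0`. -/
noncomputable def carr (S : SynapticAlgebra R) (a : R) : R :=
  @dite R (a ∈ S.carrier) (Classical.dec _) (fun h => Classical.choose (S.SA7 h)) (fun _ => 0)

/-- Absolute value: `|a| := (a²)^{1/2}`. -/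
noncomputable def abs (S : SynapticAlgebra R) (a : R) : R := S.sqrt (a * a)

/-- Positive part: `a⁺ := ½(|a| + a)`. -/
noncomputable def posPart (S : SynapticAlgebra R) (a : R) : R := (1/2 : ℝ) • (S.abs a + a)

/-- Negative part: `a⁻ := ½(|a| − a)`. -/
noncomputable def negPart (S : SynapticAlgebra R) (a : R) : R := (1/2 : ℝ) • (S.abs a - a)

/-- Signum: `sgn(a) := (a⁺)° − (a⁻)°`. -/
noncomputable def sgn (S : SynapticAlgebra R) (a : R) : R :=
  S.carr (S.posPart a) - S.carr (S.negPart a)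

/-- The Sasaki mapping: `φ_a(b) := (aba)°`. -/
noncomputable def sas (S : SynapticAlgebra R) (a b : R) : R := S.carr (a * b * a)

/-- `m` is the infimum of the projections `p` and `q` in the poset `P` of projections. -/
def IsMeet (S : SynapticAlgebra R) (p q m : R) : Prop :=
  S.IsProj m ∧ S.le m p ∧ S.le m q ∧ ∀ r, S.IsProj r → S.le r p → S.le r q → S.le r m

/-- `j` is the supremum of the projections `p` and `q` in the poset `P` of projections. -/
def IsJoin (S : SynapticAlgebra R) (p q j : R) : Prop :=
  S.IsProj j ∧ S.le p j ∧ S.le q j ∧ ∀ r, S.IsProj r → S.le p r → S.le q r → S.le j r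

end SynapticAlgebra

open SynapticAlgebra Filter

variable {R : Type*} [Ring R] [Algebra ℝ R]

/-!
Everything reduces to statements of the form `-t ≤ x ≤ t` (`AbsLe x t`), since the norm is the
infimum of such `t`. For (i), `t² - a² = (t - a)(t + a)` is a product of commuting positives, and
conversely `(t + a)² + (t² - a²) = 2t (t + a)`. For (iv), after scaling `a` and `b` into the unit
interval, `(a + b)² - (a - b)² = 2(ab + ba)` with both squares between `0` and `4` by (i).
-/

open Topology in
lemma exists_lt_lt_mul_lt_of_mul_lt {x y t : ℝ} (h : x * y < t) :
    ∃ α β, x < α ∧ y < β ∧ α * β < t := by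
  have hcont : ContinuousAt (fun δ : ℝ => (x + δ) * (y + δ)) 0 := by fun_prop
  have hnear : ∀ᶠ δ in 𝓝[>] (0 : ℝ), (x + δ) * (y + δ) < t :=
    nhdsWithin_le_nhds (hcont.eventually_lt_const (by simpa using h))
  obtain ⟨δ, hδt, hδ⟩ := (hnear.and self_mem_nhdsWithin).exists
  exact ⟨x + δ, y + δ, lt_add_of_pos_right x hδ, lt_add_of_pos_right y hδ, hδt⟩

namespace SynapticAlgebra

variable (S : SynapticAlgebra R)

section Order

lemma sub_mem {x y : R} (hx : x ∈ S.carrier) (hy : y ∈ S.carrier) : x - y ∈ S.carrier := by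
  simpa only [sub_eq_add_neg] using S.add_mem hx (S.neg_mem hy)

lemma zero_le_iff {x : R} : S.le 0 x ↔ x ∈ S.Pos := by
  rw [le, sub_zero]

lemma le_trans {x y z : R} (hxy : S.le x y) (hyz : S.le y z) : S.le x z := by
  have h := S.pos_add hyz hxy
  rwa [sub_add_sub_cancel] at h

lemma add_le_add {x y z w : R} (hxy : S.le x y) (hzw : S.le z w) : S.le (x + z) (y + w) := by
  unfold le
  rw [add_sub_add_comm]
  exact S.pos_add hxy hzw

lemma neg_le_neg {x y : R} (h : S.le x y) : S.le (-y) (-x) := by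
  unfold le
  rwa [neg_sub_neg]

lemma smul_le_smul {x y : R} {s : ℝ} (h : S.le x y) (hs : 0 ≤ s) : S.le (s • x) (s • y) := by
  unfold le
  rw [← smul_sub]
  exact S.pos_smul hs h

lemma pos_of_smul_pos {x : R} {s : ℝ} (hs : 0 < s) (h : s • x ∈ S.Pos) : x ∈ S.Pos := by
  simpa [smul_smul, inv_mul_cancel₀ hs.ne'] using S.pos_smul (inv_nonneg.2 hs.le) h

lemma scal_le_scal {s t : ℝ} (h : s ≤ t) : S.le (S.scal s) (S.scal t) := by
  unfold le scal
  rw [← sub_smul]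
  exact S.pos_smul (sub_nonneg.2 h) S.one_pos

lemma scal_add (s t : ℝ) : S.scal (s + t) = S.scal s + S.scal t := add_smul s t 1

lemma scal_neg (t : ℝ) : S.scal (-t) = -S.scal t := neg_smul t 1

lemma smul_scal (s t : ℝ) : s • S.scal t = S.scal (s * t) := smul_smul s t 1

lemma scal_mul_self (t : ℝ) : S.scal t * S.scal t = S.scal (t * t) := by
  simp only [scal, smul_mul_smul_comm, mul_one]

lemma commute_scal (t : ℝ) (x : R) : Commute (S.scal t) x := (Commute.one_left x).smul_left t

end Order

section AbsLe

def AbsLe (x : R) (t : ℝ) : Prop := S.le (S.scal (-t)) x ∧ S.le x (S.scal t)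

variable {S}

lemma AbsLe.mono {x : R} {t u : ℝ} (h : S.AbsLe x t) (htu : t ≤ u) : S.AbsLe x u :=
  ⟨S.le_trans (S.scal_le_scal (by linarith)) h.1, S.le_trans h.2 (S.scal_le_scal htu)⟩

lemma AbsLe.neg {x : R} {t : ℝ} (h : S.AbsLe x t) : S.AbsLe (-x) t := by
  refine ⟨?_, ?_⟩
  · simpa only [scal_neg] using S.neg_le_neg h.2
  · simpa only [scal_neg, neg_neg] using S.neg_le_neg h.1

lemma AbsLe.add {x y : R} {t u : ℝ} (hx : S.AbsLe x t) (hy : S.AbsLe y u) :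
    S.AbsLe (x + y) (t + u) := by
  refine ⟨?_, ?_⟩
  · simpa only [neg_add, scal_add] using S.add_le_add hx.1 hy.1
  · simpa only [scal_add] using S.add_le_add hx.2 hy.2

lemma AbsLe.sub {x y : R} {t u : ℝ} (hx : S.AbsLe x t) (hy : S.AbsLe y u) :
    S.AbsLe (x - y) (t + u) := by
  simpa only [sub_eq_add_neg] using hx.add hy.neg

lemma AbsLe.smul {x : R} {t s : ℝ} (h : S.AbsLe x t) (hs : 0 ≤ s) : S.AbsLe (s • x) (s * t) := by
  refine ⟨?_, ?_⟩
  · simpa only [smul_scal, mul_neg] using S.smul_le_smul h.1 hs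
  · simpa only [smul_scal] using S.smul_le_smul h.2 hs

lemma absLe_of_pos_of_le {x : R} {t : ℝ} (hx : x ∈ S.Pos) (h : S.le x (S.scal t)) (ht : 0 ≤ t) :
    S.AbsLe x t := by
  refine ⟨S.le_trans ?_ ((S.zero_le_iff).2 hx), h⟩
  simpa [le, scal_neg, scal] using S.pos_smul ht S.one_pos

lemma mul_self_le_of_absLe {a : R} {t : ℝ} (h : S.AbsLe a t) :
    S.le (a * a) (S.scal (t * t)) := by
  have hplus : S.scal t + a ∈ S.Pos := by simpa [le, scal_neg, add_comm] using h.1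
  have hc : Commute (S.scal t) a := S.commute_scal t a
  have hfactors : Commute (S.scal t - a) (S.scal t + a) :=
    ((Commute.refl _).sub_left hc.symm).add_right (hc.sub_left (Commute.refl a))
  unfold le
  rw [← scal_mul_self, hc.mul_self_sub_mul_self_eq']
  exact S.SA2 h.2 hplus hfactors

lemma neg_scal_le_of_mul_self_le {a : R} (ha : a ∈ S.carrier) {t : ℝ} (ht : 0 < t)
    (h : S.le (a * a) (S.scal (t * t))) : S.le (S.scal (-t)) a := by
  have hsq := S.SA3 (S.add_mem (S.smul_mem t S.one_mem) ha)
  have hsum := S.pos_add hsq h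
  have hid : (t • (1 : R) + a) * (t • (1 : R) + a) + ((t * t) • (1 : R) - a * a)
      = (2 * t) • (t • (1 : R) + a) := by
    simp only [add_mul, mul_add, smul_mul_assoc, mul_smul_comm, one_mul, mul_one]
    module
  unfold le scal at *
  rw [hid] at hsum
  rw [neg_smul, sub_neg_eq_add, add_comm]
  exact S.pos_of_smul_pos (by positivity) hsum

theorem absLe_iff_mul_self_le {a : R} (ha : a ∈ S.carrier) {t : ℝ} (ht : 0 < t) :
    S.AbsLe a t ↔ S.le (a * a) (S.scal (t * t)) := by
  refine ⟨mul_self_le_of_absLe, fun h => ⟨neg_scal_le_of_mul_self_le ha ht h, ?_⟩⟩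
  have hneg := neg_scal_le_of_mul_self_le (S.neg_mem ha) ht (by rwa [neg_mul_neg])
  simpa only [scal_neg, neg_neg] using S.neg_le_neg hneg

lemma AbsLe.jordan_of_absLe_one {c d : R} (hcm : c ∈ S.carrier) (hdm : d ∈ S.carrier)
    (hc : S.AbsLe c 1) (hd : S.AbsLe d 1) : S.AbsLe ((1 / 2 : ℝ) • (c * d + d * c)) 1 := by
  have hplus : S.le ((c + d) * (c + d)) (S.scal 4) := by
    simpa [show ((1 : ℝ) + 1) * (1 + 1) = 4 by norm_num] using mul_self_le_of_absLe (hc.add hd)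
  have hminus : S.le ((c - d) * (c - d)) (S.scal 4) := by
    simpa [show ((1 : ℝ) + 1) * (1 + 1) = 4 by norm_num] using mul_self_le_of_absLe (hc.sub hd)
  have hid : (c + d) * (c + d) = (c - d) * (c - d) + (2 : ℝ) • (c * d + d * c) := by
    rw [two_smul]; noncomm_ring
  have hupper : S.le ((2 : ℝ) • (c * d + d * c)) (S.scal 4) := by
    refine S.le_trans ?_ hplus
    rw [le, hid, add_sub_cancel_right]
    exact S.SA3 (S.sub_mem hcm hdm)
  have hlower : S.le (S.scal (-4)) ((2 : ℝ) • (c * d + d * c)) := by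
    rw [le]
    convert S.pos_add hminus (S.SA3 (S.add_mem hcm hdm)) using 1
    rw [scal_neg, hid]
    abel
  convert (show S.AbsLe _ 4 from ⟨hlower, hupper⟩).smul (show (0 : ℝ) ≤ 1 / 4 by norm_num)
    using 1 <;> norm_num [smul_smul]

theorem AbsLe.jordan {a b : R} (ha : a ∈ S.carrier) (hb : b ∈ S.carrier) {α β : ℝ}
    (hα : 0 < α) (hβ : 0 < β) (h₁ : S.AbsLe a α) (h₂ : S.AbsLe b β) :
    S.AbsLe ((1 / 2 : ℝ) • (a * b + b * a)) (α * β) := by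
  have hunit := AbsLe.jordan_of_absLe_one (S.smul_mem α⁻¹ ha) (S.smul_mem β⁻¹ hb)
    (by simpa [inv_mul_cancel₀ hα.ne'] using h₁.smul (inv_nonneg.2 hα.le))
    (by simpa [inv_mul_cancel₀ hβ.ne'] using h₂.smul (inv_nonneg.2 hβ.le))
  convert hunit.smul (mul_pos hα hβ).le using 1
  · rw [smul_mul_smul_comm, smul_mul_smul_comm]
    match_scalars <;> field_simp
  · ring

end AbsLe

section Norm

variable {S}

lemma nrm_nonneg (x : R) : 0 ≤ S.nrm x := Real.sInf_nonneg fun _ ht => ht.1.le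

lemma nrm_le_of_absLe {x : R} {t : ℝ} (ht : 0 < t) (h : S.AbsLe x t) : S.nrm x ≤ t :=
  csInf_le ⟨0, fun _ hs => hs.1.le⟩ ⟨ht, h⟩

lemma nrm_le_of_forall_absLe {x : R} {c : ℝ} (hc : 0 ≤ c) (h : ∀ t, c < t → S.AbsLe x t) :
    S.nrm x ≤ c :=
  le_of_forall_gt_imp_ge_of_dense fun t ht => nrm_le_of_absLe (hc.trans_lt ht) (h t ht)

lemma exists_absLe {x : R} (hx : x ∈ S.carrier) : ∃ t, 0 < t ∧ S.AbsLe x t := by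
  obtain ⟨n, hn⟩ := S.orderUnit hx
  obtain ⟨m, hm⟩ := S.orderUnit (S.neg_mem hx)
  have hlow : S.le (S.scal (-m)) x := by
    simpa only [scal_neg, neg_neg] using S.neg_le_neg (show S.le (-x) (S.scal m) from hm)
  refine ⟨n + m + 1, by positivity, S.le_trans (S.scal_le_scal ?_) hlow,
    S.le_trans hn (S.scal_le_scal ?_)⟩ <;> linarith [(n.cast_nonneg : (0 : ℝ) ≤ n),
      (m.cast_nonneg : (0 : ℝ) ≤ m)]

lemma absLe_of_nrm_lt {x : R} (hx : x ∈ S.carrier) {t : ℝ} (h : S.nrm x < t) : S.AbsLe x t := by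
  obtain ⟨s, hs, hst⟩ := exists_lt_of_csInf_lt (S.exists_absLe hx) h
  exact hs.2.mono hst.le

theorem nrm_mul_self {a : R} (ha : a ∈ S.carrier) : S.nrm (a * a) = S.nrm a ^ 2 := by
  apply le_antisymm
  · refine nrm_le_of_forall_absLe (by positivity) fun t ht => ?_
    have ht0 : 0 ≤ t := (sq_nonneg _).trans ht.le
    have hsq := mul_self_le_of_absLe (absLe_of_nrm_lt ha ((Real.lt_sqrt (nrm_nonneg a)).2 ht))
    rw [Real.mul_self_sqrt ht0] at hsq
    exact absLe_of_pos_of_le (S.SA3 ha) hsq ht0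
  · have hsqrt : S.nrm a ≤ √(S.nrm (a * a)) := by
      refine nrm_le_of_forall_absLe (Real.sqrt_nonneg _) fun t ht => ?_
      have ht0 : 0 < t := (Real.sqrt_nonneg _).trans_lt ht
      have hlt : S.nrm (a * a) < t * t := ((Real.sqrt_lt' ht0).1 ht).trans_eq (sq t)
      exact (absLe_iff_mul_self_le ha ht0).2 (absLe_of_nrm_lt (S.pos_subset (S.SA3 ha)) hlt).2
    exact (Real.le_sqrt (nrm_nonneg a) (nrm_nonneg _)).1 hsqrt

theorem nrm_sub_le_max_of_pos {a b : R} (ha : a ∈ S.Pos) (hb : b ∈ S.Pos) :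
    S.nrm (a - b) ≤ max (S.nrm a) (S.nrm b) := by
  refine nrm_le_of_forall_absLe (le_max_of_le_left (nrm_nonneg a)) fun t ht => ?_
  have hta := absLe_of_nrm_lt (S.pos_subset ha) ((le_max_left _ _).trans_lt ht)
  have htb := absLe_of_nrm_lt (S.pos_subset hb) ((le_max_right _ _).trans_lt ht)
  refine ⟨S.le_trans htb.neg.1 ?_, S.le_trans ?_ hta.2⟩
  · rwa [le, sub_neg_eq_add, sub_add_cancel]
  · rwa [le, sub_sub_cancel]

theorem nrm_jordan_le {a b : R} (ha : a ∈ S.carrier) (hb : b ∈ S.carrier) :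
    S.nrm ((1 / 2 : ℝ) • (a * b + b * a)) ≤ S.nrm a * S.nrm b := by
  refine nrm_le_of_forall_absLe (mul_nonneg (nrm_nonneg a) (nrm_nonneg b)) fun t ht => ?_
  obtain ⟨α, β, hα, hβ, hαβ⟩ := exists_lt_lt_mul_lt_of_mul_lt ht
  exact (AbsLe.jordan ha hb ((nrm_nonneg a).trans_lt hα) ((nrm_nonneg b).trans_lt hβ)
    (absLe_of_nrm_lt ha hα) (absLe_of_nrm_lt hb hβ)).mono hαβ.le

theorem nrm_mul_le_of_commute {a b : R} (ha : a ∈ S.carrier) (hb : b ∈ S.carrier)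
    (hab : a * b = b * a) : S.nrm (a * b) ≤ S.nrm a * S.nrm b := by
  have hjordan : (1 / 2 : ℝ) • (a * b + b * a) = a * b := by rw [← hab]; module
  simpa only [hjordan] using nrm_jordan_le ha hb

end Norm

end SynapticAlgebra

/-- Lemma 1.3: (i) `−λ ≤ a ≤ λ ↔ a² ≤ λ²`; (ii) `‖a²‖ = ‖a‖²`;
(iii) if `0 ≤ a, b` then `‖a − b‖ ≤ max ‖a‖ ‖b‖`; (iv) `‖a∘b‖ ≤ ‖a‖ ‖b‖`;
(v) if `aCb` then `‖ab‖ ≤ ‖a‖ ‖b‖`. -/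
theorem stmt0 (S : SynapticAlgebra R) {a b : R} (ha : a ∈ S.carrier) (hb : b ∈ S.carrier)
    {l : ℝ} (hl : 0 < l) :
    ((S.le (S.scal (-l)) a ∧ S.le a (S.scal l)) ↔ S.le (a * a) (S.scal (l * l))) ∧
    (S.nrm (a * a) = S.nrm a ^ 2) ∧
    (a ∈ S.Pos → b ∈ S.Pos → S.nrm (a - b) ≤ max (S.nrm a) (S.nrm b)) ∧
    (S.nrm ((1/2 : ℝ) • (a * b + b * a)) ≤ S.nrm a * S.nrm b) ∧
    (a * b = b * a → S.nrm (a * b) ≤ S.nrm a * S.nrm b) :=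
  ⟨absLe_iff_mul_self_le ha hl, nrm_mul_self ha, nrm_sub_le_max_of_pos, nrm_jordan_le ha hb,
    nrm_mul_le_of_commute ha hb⟩
end

section
/- Let 0 ≤ a ∈ A. Then there exists a unique r ∈ A such that 0 ≤ r and r² = a; moreover this r belongs to CC(a). -/
open SynapticAlgebra Filter

variable {R : Type*} [Ring R] [Algebra ℝ R]

/-- Theorem 2.2: if `0 ≤ a` then there is a unique `r` with `0 ≤ r` and `r² = a`;
moreover `r ∈ CC(a)`. -/
theorem stmt1 (S : SynapticAlgebra R) {a : R} (ha : a ∈ S.Pos) :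
    (∃! r : R, r ∈ S.Pos ∧ r * r = a) ∧
    (∀ r : R, r ∈ S.Pos → r * r = a → S.inCC a r) := by
  obtain ⟨b, hbP, hbC, hbsq⟩ := S.SA6 ha
  have hbc : b ∈ S.carrier := S.pos_subset hbP
  have key : ∀ r : R, r ∈ S.Pos → r * r = a → r = b := by
    intro r hrP hrsq
    have hrc : r ∈ S.carrier := S.pos_subset hrP
    have hra : r * a = a * r := by rw [← hrsq]; noncomm_ring
    have hrb : r * b = b * r := hbC r hrc hra
    set d := r - b with hd
    have hdc : d ∈ S.carrier := by
      simpa [hd, sub_eq_add_neg] using S.add_mem hrc (S.neg_mem hbc)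
    have hdr : d * r = r * d := by
      simp only [hd, sub_mul, mul_sub, hrb]
    have hdb : d * b = b * d := by
      simp only [hd, sub_mul, mul_sub, hrb]
    have hd2 : d * d ∈ S.Pos := S.SA3 hdc
    have hzero : d * (r + b) = 0 := by
      have h1 : d * (r + b) = r * r - b * b + (r * b - b * r) := by
        rw [hd]; noncomm_ring
      rw [h1, hrsq, hbsq, hrb]; simp
    have hxr : d * d * r = r * (d * d) := by
      rw [mul_assoc, hdr, ← mul_assoc, hdr, mul_assoc]
    have hxb : d * d * b = b * (d * d) := by
      rw [mul_assoc, hdb, ← mul_assoc, hdb, mul_assoc]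
    have hx : d * d * r ∈ S.Pos := S.SA2 hd2 hrP hxr
    have hy : d * d * b ∈ S.Pos := S.SA2 hd2 hbP hxb
    have hsum : d * d * r + d * d * b = 0 := by
      have : d * d * r + d * d * b = d * (d * (r + b)) := by noncomm_ring
      rw [this, hzero, mul_zero]
    have hx0 : d * d * r = 0 := by
      apply S.pos_antisymm hx
      have h : d * d * r = -(d * d * b) := eq_neg_of_add_eq_zero_left hsum
      rw [h, neg_neg]; exact hy
    have hy0 : d * d * b = 0 := by rw [hx0, zero_add] at hsum; exact hsum
    have hd3 : d * d * d = 0 := by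
      have : d * d * d = d * d * r - d * d * b := by rw [hd]; noncomm_ring
      rw [this, hx0, hy0, sub_zero]
    have hd4 : (d * d) * 1 * (d * d) = 0 := by
      have : (d * d) * 1 * (d * d) = (d * d * d) * d := by noncomm_ring
      rw [this, hd3, zero_mul]
    have hdd0 : d * d = 0 := by
      have := (S.SA5 (S.pos_subset hd2) S.one_pos hd4).1
      simpa using this
    have hd0 : d = 0 := by
      have h5 : d * 1 * d = 0 := by simpa using hdd0
      have := (S.SA5 hdc S.one_pos h5).1
      simpa using this
    exact sub_eq_zero.mp hd0
  constructor
  · exact ⟨b, ⟨hbP, hbsq⟩, fun r ⟨h1, h2⟩ => key r h1 h2⟩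
  · intro r h1 h2
    rw [key r h1 h2]
    exact ⟨hbc, hbC⟩
end

section
/- Let e ∈ E and p ∈ P. Then the following conditions are mutually equivalent: (i) e ≤ p; (ii) e = ep = pe; (iii) e = pep; (iv) e = ep; (v) e = pe. -/
open SynapticAlgebra Filter

variable {R : Type*} [Ring R] [Algebra ℝ R]

/-- Theorem 2.4: for an effect `e` and a projection `p`, the conditions
`e ≤ p`, `e = ep = pe`, `e = pep`, `e = ep`, `e = pe` are mutually equivalent. -/
theorem stmt2 (S : SynapticAlgebra R) {e p : R} (he : S.IsEff e) (hp : S.IsProj p) :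
    [S.le e p, e = e * p ∧ e = p * e, e = p * e * p, e = e * p, e = p * e].TFAE := by
  obtain ⟨heC, he0, he1⟩ := he
  obtain ⟨hpC, hpp⟩ := hp
  have heP : e ∈ S.Pos := by simpa [SynapticAlgebra.le] using he0
  have h1e : (1 : R) - e ∈ S.Pos := he1
  have hqC : (1 : R) - p ∈ S.carrier := by
    simpa [sub_eq_add_neg] using S.add_mem S.one_mem (S.neg_mem hpC)
  have hqq : ((1 : R) - p) * (1 - p) = 1 - p := by
    rw [sub_mul, one_mul, mul_sub, mul_one, hpp]; simp
  have hqP : (1 : R) - p ∈ S.Pos := by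
    have := S.SA3 hqC; rwa [hqq] at this
  have hpP : p ∈ S.Pos := by
    have := S.SA3 hpC; rwa [hpp] at this
  have hqp0 : ((1 : R) - p) * p = 0 := by rw [sub_mul, one_mul, hpp, sub_self]
  tfae_have 1 → 2
  | h => by
    have h2 : (1 - p) * (p - e) * (1 - p) ∈ S.Pos := S.SA4 hqP h
    have h3 : (1 - p) * e * (1 - p) ∈ S.Pos := S.SA4 hqP heP
    have h4 : (1 - p) * (p - e) * (1 - p) = -((1 - p) * e * (1 - p)) := by
      rw [mul_sub ((1 : R) - p) p e, hqp0, zero_sub, neg_mul]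
    rw [h4] at h2
    have h0 : (1 - p) * e * (1 - p) = 0 := S.pos_antisymm h3 h2
    obtain ⟨hqe, heq⟩ := S.SA5 hqC heP h0
    rw [sub_mul, one_mul, sub_eq_zero] at hqe
    rw [mul_sub, mul_one, sub_eq_zero] at heq
    exact ⟨heq, hqe⟩
  tfae_have 2 → 3
  | ⟨h1, h2⟩ => by rw [mul_assoc, ← h1, ← h2]
  tfae_have 3 → 1
  | h => by
    have h2 : p * (1 - e) * p ∈ S.Pos := S.SA4 hpP h1e
    rwa [mul_sub, mul_one, sub_mul, hpp, ← h] at h2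
  tfae_have 2 → 4
  | h => h.1
  tfae_have 2 → 5
  | h => h.2
  tfae_have 4 → 2
  | h => by
    have heq0 : e * (1 - p) = 0 := by rw [mul_sub, mul_one, ← h, sub_self]
    have h0 : (1 - p) * e * (1 - p) = 0 := by rw [mul_assoc, heq0, mul_zero]
    obtain ⟨hqe, _⟩ := S.SA5 hqC heP h0
    rw [sub_mul, one_mul, sub_eq_zero] at hqe
    exact ⟨h, hqe⟩
  tfae_have 5 → 2
  | h => by
    have hqe0 : (1 - p) * e = 0 := by rw [sub_mul, one_mul, ← h, sub_self]
    have h0 : (1 - p) * e * (1 - p) = 0 := by rw [hqe0, zero_mul]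
    obtain ⟨_, heq⟩ := S.SA5 hqC heP h0
    rw [mul_sub, mul_one, sub_eq_zero] at heq
    exact ⟨heq, h⟩
  tfae_finish
end

section
/- If p ∈ E, then the following conditions are mutually equivalent: (i) p ∈ P; (ii) for every λ ∈ ℝ with 0 < λ < 1 and every e ∈ E, λe ≤ p ⇔ e ≤ p; (iii) p is an extreme point of the convex set E; (iv) for all e, f ∈ E with e + f ∈ E, if e ≤ p and f ≤ p then e + f ≤ p; (v) if e ∈ E and e ≤ p and e ≤ 1 − p, then e = 0. -/
open SynapticAlgebra Filter

variable {R : Type*} [Ring R] [Algebra ℝ R]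

private lemma pos_sum_zero (S : SynapticAlgebra R) {a b : R} (ha : a ∈ S.Pos)
    (hb : b ∈ S.Pos) (h : a + b = 0) : a = 0 :=
  S.pos_antisymm ha (by rwa [neg_eq_of_add_eq_zero_left (by rwa [add_comm] at h)])

private lemma smul_cancel {t : ℝ} (ht : t ≠ 0) {x : R} (h : t • x = 0) : x = 0 := by
  have := congrArg (fun y => t⁻¹ • y) h
  simpa [smul_smul, inv_mul_cancel₀ ht] using this

/-- If `p` is an idempotent effect and `0 ≤ e ≤ p` then `(1-p)e(1-p) = 0` forces
`pe = ep = e`. -/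
private lemma absorb (S : SynapticAlgebra R) {p e : R} (h1p : (1:R) - p ∈ S.Pos)
    (hpp : p * p = p) (he : e ∈ S.Pos) (hep : p - e ∈ S.Pos) :
    p * e = e ∧ e * p = e := by
  have h1pc : (1:R) - p ∈ S.carrier := S.pos_subset h1p
  have hx : (1 - p) * e * (1 - p) ∈ S.Pos := S.SA4 h1p he
  have hy : (1 - p) * (p - e) * (1 - p) ∈ S.Pos := S.SA4 h1p hep
  have h0 : (1 - p) * p = 0 := by rw [sub_mul, one_mul, hpp, sub_self]
  have hsum : (1 - p) * e * (1 - p) + (1 - p) * (p - e) * (1 - p) = 0 := by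
    have : (1 - p) * e * (1 - p) + (1 - p) * (p - e) * (1 - p)
        = (1 - p) * p * (1 - p) := by noncomm_ring
    rw [this, h0, zero_mul]
  have hz : (1 - p) * e * (1 - p) = 0 := pos_sum_zero S hx hy hsum
  obtain ⟨h1, h2⟩ := S.SA5 h1pc he hz
  constructor
  · rw [sub_mul, one_mul, sub_eq_zero] at h1; exact h1.symm
  · rw [mul_sub, mul_one, sub_eq_zero] at h2; exact h2.symm

/-- Theorem 2.7: characterization of projections among effects: `p ∈ P` iff
(ii) `λe ≤ p ↔ e ≤ p` for all `0 < λ < 1` and effects `e`; iff (iii) `p` is an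
extreme point of `E`; iff (iv) `e, f ≤ p ⟹ e + f ≤ p` whenever `e, f, e+f ∈ E`;
iff (v) `e ≤ p, 1−p ⟹ e = 0` for effects `e`. -/
theorem stmt3 (S : SynapticAlgebra R) {p : R} (hp : S.IsEff p) :
    [p * p = p,
     ∀ t : ℝ, 0 < t → t < 1 → ∀ e, S.IsEff e → (S.le (t • e) p ↔ S.le e p),
     ∀ t : ℝ, 0 < t → t < 1 → ∀ e f, S.IsEff e → S.IsEff f →
       p = t • e + (1 - t) • f → e = p ∧ f = p,
     ∀ e f, S.IsEff e → S.IsEff f → S.IsEff (e + f) →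
       S.le e p → S.le f p → S.le (e + f) p,
     ∀ e, S.IsEff e → S.le e p → S.le e (1 - p) → e = 0].TFAE := by
  obtain ⟨hpc, hp0', hp1'⟩ := hp
  have hp0 : p ∈ S.Pos := by simpa [SynapticAlgebra.le] using hp0'
  have h1p : (1:R) - p ∈ S.Pos := hp1'
  have h1pc : (1:R) - p ∈ S.carrier := S.pos_subset h1p
  tfae_have 1 → 2 := by
    intro hpp t ht0 ht1 e ⟨hec, he0', he1'⟩
    have he0 : e ∈ S.Pos := by simpa [SynapticAlgebra.le] using he0'
    have he1 : (1:R) - e ∈ S.Pos := he1'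
    constructor
    · intro hte
      have hte' : p - t • e ∈ S.Pos := hte
      have hx : (1 - p) * (t • e) * (1 - p) ∈ S.Pos := S.SA4 h1p (S.pos_smul ht0.le he0)
      have hy : (1 - p) * (p - t • e) * (1 - p) ∈ S.Pos := S.SA4 h1p hte'
      have h0 : (1 - p) * p = 0 := by rw [sub_mul, one_mul, hpp, sub_self]
      have hsum : (1 - p) * (t • e) * (1 - p) + (1 - p) * (p - t • e) * (1 - p) = 0 := by
        have : (1 - p) * (t • e) * (1 - p) + (1 - p) * (p - t • e) * (1 - p)
            = (1 - p) * p * (1 - p) := by noncomm_ring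
        rw [this, h0, zero_mul]
      have hz : (1 - p) * (t • e) * (1 - p) = 0 := pos_sum_zero S hx hy hsum
      have hz' : (1 - p) * e * (1 - p) = 0 := by
        apply smul_cancel ht0.ne'
        rw [← hz, mul_smul_comm, smul_mul_assoc]
      obtain ⟨h1, h2⟩ := S.SA5 h1pc he0 hz'
      have hpe : p * e = e := by rw [sub_mul, one_mul, sub_eq_zero] at h1; exact h1.symm
      have hep : e * p = e := by rw [mul_sub, mul_one, sub_eq_zero] at h2; exact h2.symm
      have : p * (1 - e) * p ∈ S.Pos := S.SA4 hp0 he1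
      have heq : p * (1 - e) * p = p - e := by
        rw [mul_sub, mul_one, sub_mul, hpp, hpe, hep]
      show p - e ∈ S.Pos
      rwa [heq] at this
    · intro hep
      have hep' : p - e ∈ S.Pos := hep
      show p - t • e ∈ S.Pos
      have : p - t • e = (p - e) + (1 - t) • e := by
        rw [sub_smul, one_smul]; abel
      rw [this]
      exact S.pos_add hep' (S.pos_smul (by linarith) he0)
  tfae_have 2 → 4 := by
    intro h2 e f he hf hef hep hfp
    have he0 : e ∈ S.Pos := by simpa [SynapticAlgebra.le] using he.2.1
    have hf0 : f ∈ S.Pos := by simpa [SynapticAlgebra.le] using hf.2.1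
    have hhalf : S.le ((1/2 : ℝ) • (e + f)) p := by
      show p - (1/2 : ℝ) • (e + f) ∈ S.Pos
      have : p - (1/2 : ℝ) • (e + f)
          = (1/2 : ℝ) • (p - e) + (1/2 : ℝ) • (p - f) := by module
      rw [this]
      exact S.pos_add (S.pos_smul (by norm_num) hep) (S.pos_smul (by norm_num) hfp)
    exact (h2 (1/2) (by norm_num) (by norm_num) (e + f) hef).mp hhalf
  tfae_have 4 → 5 := by
    intro h4 e he hep he1p
    have he0 : e ∈ S.Pos := by simpa [SynapticAlgebra.le] using he.2.1
    have hec : e ∈ S.carrier := he.1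
    have hep' : p - e ∈ S.Pos := hep
    have he1p' : (1 - p) - e ∈ S.Pos := he1p
    have key : ∀ n : ℕ, p - (n : ℝ) • e ∈ S.Pos := by
      intro n
      induction n with
      | zero => simpa using hp0
      | succ n ih =>
        have hnE : S.IsEff ((n : ℝ) • e) := by
          refine ⟨S.smul_mem _ hec, ?_, ?_⟩
          · show (n : ℝ) • e - 0 ∈ S.Pos
            rw [sub_zero]; exact S.pos_smul (by positivity) he0
          · show (1 : R) - (n : ℝ) • e ∈ S.Pos
            have : (1 : R) - (n : ℝ) • e = (1 - p) + (p - (n : ℝ) • e) := by abel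
            rw [this]; exact S.pos_add h1p ih
        have hsumE : S.IsEff ((n : ℝ) • e + e) := by
          refine ⟨S.add_mem (S.smul_mem _ hec) hec, ?_, ?_⟩
          · show (n : ℝ) • e + e - 0 ∈ S.Pos
            rw [sub_zero]; exact S.pos_add (S.pos_smul (by positivity) he0) he0
          · show (1 : R) - ((n : ℝ) • e + e) ∈ S.Pos
            have : (1 : R) - ((n : ℝ) • e + e) = (p - (n : ℝ) • e) + ((1 - p) - e) := by
              abel
            rw [this]; exact S.pos_add ih he1p'
        have := h4 ((n : ℝ) • e) e hnE he hsumE ih hep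
        have h' : p - ((n : ℝ) • e + e) ∈ S.Pos := this
        have : p - ((n + 1 : ℕ) : ℝ) • e = p - ((n : ℝ) • e + e) := by
          push_cast
          rw [add_smul, one_smul]
        rw [this]; exact h'
    have harch : -e ∈ S.Pos := by
      apply S.arch hec S.one_mem
      intro n
      have : (1 : R) - (n : ℝ) • e = (1 - p) + (p - (n : ℝ) • e) := by abel
      rw [this]; exact S.pos_add h1p (key n)
    exact S.pos_antisymm he0 harch
  tfae_have 5 → 1 := by
    intro h5
    have hpp0 : p - p * p ∈ S.Pos := by
      have : p * (1 - p) ∈ S.Pos :=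
        S.SA2 hp0 h1p (by noncomm_ring)
      rwa [mul_sub, mul_one] at this
    have hppP : p * p ∈ S.Pos := S.SA3 hpc
    have heff : S.IsEff (p - p * p) := by
      refine ⟨S.pos_subset hpp0, ?_, ?_⟩
      · show p - p * p - 0 ∈ S.Pos
        rw [sub_zero]; exact hpp0
      · show (1 : R) - (p - p * p) ∈ S.Pos
        have : (1 : R) - (p - p * p) = (1 - p) + p * p := by abel
        rw [this]; exact S.pos_add h1p hppP
    have h1 : S.le (p - p * p) p := by
      show p - (p - p * p) ∈ S.Pos
      have : p - (p - p * p) = p * p := by abel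
      rw [this]; exact hppP
    have h2 : S.le (p - p * p) (1 - p) := by
      show (1 - p) - (p - p * p) ∈ S.Pos
      have : (1 - p) - (p - p * p) = (1 - p) * (1 - p) := by noncomm_ring
      rw [this]; exact S.SA3 h1pc
    have := h5 (p - p * p) heff h1 h2
    rw [sub_eq_zero] at this; exact this.symm
  tfae_have 1 → 3 := by
    intro hpp t ht0 ht1 e f he hf heq
    obtain ⟨hec, he0', he1'⟩ := he
    obtain ⟨hfc, hf0', hf1'⟩ := hf
    have he0 : e ∈ S.Pos := by simpa [SynapticAlgebra.le] using he0'
    have hf0 : f ∈ S.Pos := by simpa [SynapticAlgebra.le] using hf0'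
    have he1 : (1:R) - e ∈ S.Pos := he1'
    have hf1 : (1:R) - f ∈ S.Pos := hf1'
    have ht1' : (0:ℝ) < 1 - t := by linarith
    have h0 : (1 - p) * p = 0 := by rw [sub_mul, one_mul, hpp, sub_self]
    have h0' : p * (1 - p) = 0 := by rw [mul_sub, mul_one, hpp, sub_self]
    -- first: (1-p)e(1-p) = 0 and (1-p)f(1-p) = 0
    have hxe : (1 - p) * e * (1 - p) ∈ S.Pos := S.SA4 h1p he0
    have hxf : (1 - p) * f * (1 - p) ∈ S.Pos := S.SA4 h1p hf0
    have hsum : t • ((1 - p) * e * (1 - p)) + (1 - t) • ((1 - p) * f * (1 - p)) = 0 := by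
      have : t • ((1 - p) * e * (1 - p)) + (1 - t) • ((1 - p) * f * (1 - p))
          = (1 - p) * (t • e + (1 - t) • f) * (1 - p) := by
        rw [mul_add, add_mul, mul_smul_comm, mul_smul_comm, smul_mul_assoc, smul_mul_assoc]
      rw [this, ← heq, h0, zero_mul]
    have hze : (1 - p) * e * (1 - p) = 0 := by
      apply smul_cancel ht0.ne'
      exact pos_sum_zero S (S.pos_smul ht0.le hxe) (S.pos_smul ht1'.le hxf) hsum
    have hzf : (1 - p) * f * (1 - p) = 0 := by
      apply smul_cancel ht1'.ne'
      refine pos_sum_zero S (S.pos_smul ht1'.le hxf) (S.pos_smul ht0.le hxe) ?_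
      rw [add_comm]; exact hsum
    obtain ⟨he1z, _⟩ := S.SA5 h1pc he0 hze
    obtain ⟨hf1z, _⟩ := S.SA5 h1pc hf0 hzf
    have hpe : p * e = e := by rw [sub_mul, one_mul, sub_eq_zero] at he1z; exact he1z.symm
    have hpf : p * f = f := by rw [sub_mul, one_mul, sub_eq_zero] at hf1z; exact hf1z.symm
    -- second: p(1-e)p = 0 and p(1-f)p = 0
    have hye : p * (1 - e) * p ∈ S.Pos := S.SA4 hp0 he1
    have hyf : p * (1 - f) * p ∈ S.Pos := S.SA4 hp0 hf1
    have hcomp : (1 : R) - p = t • (1 - e) + (1 - t) • (1 - f) := by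
      rw [heq]; module
    have hsum2 : t • (p * (1 - e) * p) + (1 - t) • (p * (1 - f) * p) = 0 := by
      have : t • (p * (1 - e) * p) + (1 - t) • (p * (1 - f) * p)
          = p * (t • (1 - e) + (1 - t) • (1 - f)) * p := by
        rw [mul_add, add_mul, mul_smul_comm, mul_smul_comm, smul_mul_assoc, smul_mul_assoc]
      rw [this, ← hcomp]
      calc p * (1 - p) * p = 0 * p := by rw [h0']
        _ = 0 := zero_mul p
    have hze2 : p * (1 - e) * p = 0 := by
      apply smul_cancel ht0.ne'
      exact pos_sum_zero S (S.pos_smul ht0.le hye) (S.pos_smul ht1'.le hyf) hsum2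
    have hzf2 : p * (1 - f) * p = 0 := by
      apply smul_cancel ht1'.ne'
      refine pos_sum_zero S (S.pos_smul ht1'.le hyf) (S.pos_smul ht0.le hye) ?_
      rw [add_comm]; exact hsum2
    obtain ⟨he2z, _⟩ := S.SA5 hpc he1 hze2
    obtain ⟨hf2z, _⟩ := S.SA5 hpc hf1 hzf2
    have : p = p * e := by rw [mul_sub, mul_one, sub_eq_zero] at he2z; exact he2z
    have hE : e = p := by rw [← hpe, ← this]
    have : p = p * f := by rw [mul_sub, mul_one, sub_eq_zero] at hf2z; exact hf2z
    have hF : f = p := by rw [← hpf, ← this]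
    exact ⟨hE, hF⟩
  tfae_have 3 → 1 := by
    intro h3
    have hpp0 : p - p * p ∈ S.Pos := by
      have : p * (1 - p) ∈ S.Pos := S.SA2 hp0 h1p (by noncomm_ring)
      rwa [mul_sub, mul_one] at this
    have hppP : p * p ∈ S.Pos := S.SA3 hpc
    have hsqc : p * p ∈ S.carrier := S.pos_subset hppP
    have heffsq : S.IsEff (p * p) := by
      refine ⟨hsqc, ?_, ?_⟩
      · show p * p - 0 ∈ S.Pos
        rw [sub_zero]; exact hppP
      · show (1 : R) - p * p ∈ S.Pos
        have : (1 : R) - p * p = (1 - p) + (p - p * p) := by abel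
        rw [this]; exact S.pos_add h1p hpp0
    have hyc : (2 : ℝ) • p - p * p ∈ S.carrier := by
      have h2p : (2 : ℝ) • p ∈ S.carrier := S.smul_mem _ hpc
      have : (2 : ℝ) • p - p * p = (2 : ℝ) • p + -(p * p) := by abel
      rw [this]; exact S.add_mem h2p (S.neg_mem hsqc)
    have heffy : S.IsEff ((2 : ℝ) • p - p * p) := by
      refine ⟨hyc, ?_, ?_⟩
      · show (2 : ℝ) • p - p * p - 0 ∈ S.Pos
        rw [sub_zero]
        have : (2 : ℝ) • p - p * p = p + (p - p * p) := by
          rw [show ((2:ℝ) • p : R) = p + p from by rw [show (2:ℝ) = 1 + 1 from by norm_num, add_smul, one_smul]]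
          abel
        rw [this]; exact S.pos_add hp0 hpp0
      · show (1 : R) - ((2 : ℝ) • p - p * p) ∈ S.Pos
        have : (1 : R) - ((2 : ℝ) • p - p * p) = (1 - p) * (1 - p) := by
          rw [show ((2:ℝ) • p : R) = p + p from by rw [show (2:ℝ) = 1 + 1 from by norm_num, add_smul, one_smul]]
          noncomm_ring
        rw [this]; exact S.SA3 h1pc
    have heq : p = (1/2 : ℝ) • (p * p) + (1 - (1/2 : ℝ)) • ((2 : ℝ) • p - p * p) := by
      module
    obtain ⟨hE, _⟩ := h3 (1/2) (by norm_num) (by norm_num) (p * p) ((2 : ℝ) • p - p * p)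
      heffsq heffy heq
    exact hE
  tfae_finish
end

section
/- Let a, b ∈ A and p ∈ P. Then: (i) pb = 0 ⇔ bp = 0; (ii) pa = a ⇔ ap = a; (iii) a·a° = a°·a = a; (iv) ab = 0 ⇔ ba = 0. -/
open SynapticAlgebra Filter

variable {R : Type*} [Ring R] [Algebra ℝ R]

namespace SynapticAlgebra

lemma key5 (S : SynapticAlgebra R) {b p : R} (hb : b ∈ S.carrier) (hp : p ∈ S.Pos)
    (h : p * b = 0 ∨ b * p = 0) : p * b = 0 ∧ b * p = 0 := by
  have hbpb : b * p * b = 0 := by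
    rcases h with h | h
    · rw [mul_assoc, h, mul_zero]
    · rw [h, zero_mul]
  have := S.SA5 hb hp hbpb
  exact ⟨this.2, this.1⟩

lemma proj_pos (S : SynapticAlgebra R) {p : R} (hp : S.IsProj p) : p ∈ S.Pos := by
  have := S.SA3 hp.1
  rwa [hp.2] at this

lemma swap5 (S : SynapticAlgebra R) {b p : R} (hb : b ∈ S.carrier) (hp : S.IsProj p) :
    p * b = 0 ↔ b * p = 0 := by
  constructor
  · exact fun h => (S.key5 hb (S.proj_pos hp) (Or.inl h)).2
  · exact fun h => (S.key5 hb (S.proj_pos hp) (Or.inr h)).1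

lemma fix5 (S : SynapticAlgebra R) {a p : R} (ha : a ∈ S.carrier) (hp : S.IsProj p) :
    p * a = a ↔ a * p = a := by
  have hq : S.IsProj (1 - p) := by
    refine ⟨?_, by rw [show (1-p)*(1-p) = 1 - p - p + p*p from by noncomm_ring, hp.2]; noncomm_ring⟩
    rw [sub_eq_add_neg]
    exact S.add_mem S.one_mem (S.neg_mem hp.1)
  have h1 : p * a = a ↔ (1 - p) * a = 0 := by
    rw [sub_mul, one_mul, sub_eq_zero, eq_comm]
  have h2 : a * p = a ↔ a * (1 - p) = 0 := by
    rw [mul_sub, mul_one, sub_eq_zero, eq_comm]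
  rw [h1, h2, S.swap5 ha hq]

lemma carr_spec (S : SynapticAlgebra R) {a : R} (ha : a ∈ S.carrier) :
    S.carr a ∈ S.carrier ∧ S.carr a * S.carr a = S.carr a ∧
      ∀ b ∈ S.carrier, (a * b = 0 ↔ S.carr a * b = 0) := by
  rw [SynapticAlgebra.carr, dif_pos ha]
  exact Classical.choose_spec (S.SA7 ha)

lemma carr_fix (S : SynapticAlgebra R) {a : R} (ha : a ∈ S.carrier) :
    a * S.carr a = a ∧ S.carr a * a = a := by
  obtain ⟨hpc, hpp, hspec⟩ := S.carr_spec ha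
  set p := S.carr a with hpdef
  have hq : (1 - p) ∈ S.carrier := by
    rw [sub_eq_add_neg]; exact S.add_mem S.one_mem (S.neg_mem hpc)
  have hpq : p * (1 - p) = 0 := by rw [mul_sub, mul_one, hpp, sub_self]
  have haq : a * (1 - p) = 0 := (hspec _ hq).2 hpq
  have hap : a * p = a := by
    rw [mul_sub, mul_one, sub_eq_zero] at haq; exact haq.symm
  exact ⟨hap, (S.fix5 ha ⟨hpc, hpp⟩).2 hap⟩

lemma comm5 (S : SynapticAlgebra R) {a b : R} (ha : a ∈ S.carrier)
    (hb : b ∈ S.carrier) (h : a * b = 0) : b * a = 0 := by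
  obtain ⟨hpc, hpp, hspec⟩ := S.carr_spec ha
  have hpb : S.carr a * b = 0 := (hspec _ hb).1 h
  have hbp : b * S.carr a = 0 := (S.swap5 hb ⟨hpc, hpp⟩).1 hpb
  calc b * a = b * (S.carr a * a) := by rw [(S.carr_fix ha).2]
    _ = b * S.carr a * a := by rw [mul_assoc]
    _ = 0 := by rw [hbp, zero_mul]

end SynapticAlgebra

/-- Lemma 2.10: (i) `pb = 0 ↔ bp = 0`; (ii) `pa = a ↔ ap = a`;
(iii) `a·a° = a°·a = a`; (iv) `ab = 0 ↔ ba = 0`. -/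
theorem stmt5 (S : SynapticAlgebra R) {a b p : R} (ha : a ∈ S.carrier)
    (hb : b ∈ S.carrier) (hp : S.IsProj p) :
    (p * b = 0 ↔ b * p = 0) ∧
    (p * a = a ↔ a * p = a) ∧
    (a * S.carr a = a ∧ S.carr a * a = a) ∧
    (a * b = 0 ↔ b * a = 0) := by
  exact ⟨S.swap5 hb hp, S.fix5 ha hp, S.carr_fix ha,
    ⟨S.comm5 ha hb, S.comm5 hb ha⟩⟩
end

section
/- Let a, b ∈ A. Then: (i) a = 0 ⇔ a° = 0; (ii) a ∈ P ⇔ a = a°; (iii) a° is the smallest projection p ∈ P such that a = ap; (iv) if e ∈ E, then e° is the smallest projection p ∈ P such that e ≤ p; (v) ab = 0 ⇔ a·b° = 0 ⇔ a°·b° = 0; (vi) a° ∈ CC(a); (vii) for every n ∈ ℕ with n ≥ 1, (aⁿ)° = a°; (viii) if 0 ≤ a ≤ b, then a° ≤ b°. -/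
open SynapticAlgebra Filter

variable {R : Type*} [Ring R] [Algebra ℝ R]

namespace SynAux

set_option linter.unusedSectionVars false

variable {R : Type*} [Ring R] [Algebra ℝ R] (S : SynapticAlgebra R)

lemma zero_pos : (0:R) ∈ S.Pos := by
  have := S.pos_smul (le_refl (0:ℝ)) S.one_pos
  simpa using this

lemma sub_mem {a b : R} (ha : a ∈ S.carrier) (hb : b ∈ S.carrier) :
    a - b ∈ S.carrier := by
  rw [sub_eq_add_neg]; exact S.add_mem ha (S.neg_mem hb)

lemma sq_mem {a : R} (ha : a ∈ S.carrier) : a * a ∈ S.carrier :=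
  S.pos_subset (S.SA3 ha)

lemma sq_zero {x : R} (hx : x ∈ S.carrier) (h : x * x = 0) : x = 0 := by
  have key : ∀ y : R, y ∈ S.carrier → y * y = 0 → -y ∈ S.Pos := by
    intro y hy hyy
    refine S.arch hy S.one_mem ?_
    intro n
    have hmem : (n:ℝ) • y - 1 ∈ S.carrier := sub_mem S (S.smul_mem _ hy) S.one_mem
    have h3 : ((n:ℝ) • y - 1) * ((n:ℝ) • y - 1)
        = ((n:ℝ)*(n:ℝ)) • (y*y) + ((1:R) - ((2*(n:ℝ))) • y) := by
      simp only [sub_mul, mul_sub, one_mul, mul_one, smul_mul_assoc, mul_smul_comm, smul_smul]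
      module
    have p1 : (1:R) - ((2*(n:ℝ))) • y ∈ S.Pos := by
      have := S.SA3 hmem
      rw [h3, hyy, smul_zero, zero_add] at this
      exact this
    have e : (1:R) - (n:ℝ) • y = (1/2 : ℝ) • (((1:R) - ((2*(n:ℝ))) • y) + 1) := by
      module
    rw [e]
    exact S.pos_smul (by norm_num) (S.pos_add p1 S.one_pos)
  have h1 : -x ∈ S.Pos := key x hx h
  have h2 : x ∈ S.Pos := by
    have := key (-x) (S.neg_mem hx) (by rw [neg_mul_neg, h])
    simpa using this
  exact S.pos_antisymm h2 h1

lemma comm_zero {a b : R} (ha : a ∈ S.carrier) (hb : b ∈ S.carrier)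
    (h : a * b = 0) : b * a = 0 := by
  have hmem : b * a ∈ S.carrier := by
    have e : b * a = (a+b)*(a+b) - a*a - b*b - a*b := by noncomm_ring
    rw [h, sub_zero] at e
    rw [e]
    exact sub_mem S (sub_mem S (sq_mem S (S.add_mem ha hb)) (sq_mem S ha)) (sq_mem S hb)
  have hsq : (b*a)*(b*a) = 0 := by
    have e : (b*a)*(b*a) = b*(a*b)*a := by noncomm_ring
    rw [e, h, mul_zero, zero_mul]
  exact sq_zero S hmem hsq

lemma symm_mem {x y : R} (hx : x ∈ S.carrier) (hy : y ∈ S.carrier) :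
    x*y + y*x ∈ S.carrier := by
  have e : x*y + y*x = (x+y)*(x+y) - x*x - y*y := by noncomm_ring
  rw [e]
  exact sub_mem S (sub_mem S (sq_mem S (S.add_mem hx hy)) (sq_mem S hx)) (sq_mem S hy)

lemma comm_mul_mem {x y : R} (hx : x ∈ S.carrier) (hy : y ∈ S.carrier)
    (h : x*y = y*x) : x*y ∈ S.carrier := by
  have e : x*y = (1/2:ℝ) • (x*y + y*x) := by rw [← h]; module
  rw [e]
  exact S.smul_mem _ (symm_mem S hx hy)

lemma quad_mem {x y : R} (hx : x ∈ S.carrier) (hy : y ∈ S.carrier) :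
    x*y*x ∈ S.carrier := by
  have hK : x*y + y*x ∈ S.carrier := symm_mem S hx hy
  have hL : x*(x*y + y*x) + (x*y + y*x)*x ∈ S.carrier := symm_mem S hx hK
  have hM : (x*x)*y + y*(x*x) ∈ S.carrier := symm_mem S (sq_mem S hx) hy
  have e : x*y*x = (1/2:ℝ) • ((x*(x*y + y*x) + (x*y + y*x)*x) - ((x*x)*y + y*(x*x))) := by
    have e2 : (x*(x*y + y*x) + (x*y + y*x)*x) - ((x*x)*y + y*(x*x)) = x*y*x + x*y*x := by
      noncomm_ring
    rw [e2]; module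
  rw [e]
  exact S.smul_mem _ (sub_mem S hL hM)

lemma carr_spec {a : R} (ha : a ∈ S.carrier) :
    S.carr a ∈ S.carrier ∧ S.carr a * S.carr a = S.carr a ∧
      ∀ b ∈ S.carrier, (a * b = 0 ↔ S.carr a * b = 0) := by
  simp only [SynapticAlgebra.carr, dif_pos ha]
  exact Classical.choose_spec (S.SA7 ha)

lemma carr_mem {a : R} (ha : a ∈ S.carrier) : S.carr a ∈ S.carrier :=
  (carr_spec S ha).1

lemma carr_idem {a : R} (ha : a ∈ S.carrier) : S.carr a * S.carr a = S.carr a :=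
  (carr_spec S ha).2.1

lemma carr_iff {a : R} (ha : a ∈ S.carrier) {c : R} (hc : c ∈ S.carrier) :
    a * c = 0 ↔ S.carr a * c = 0 :=
  (carr_spec S ha).2.2 c hc

lemma one_sub_mem {p : R} (hp : p ∈ S.carrier) : (1:R) - p ∈ S.carrier :=
  sub_mem S S.one_mem hp

lemma mul_carr {a : R} (ha : a ∈ S.carrier) : a * S.carr a = a := by
  have h0 : S.carr a * (1 - S.carr a) = 0 := by
    rw [mul_sub, mul_one, carr_idem S ha, sub_self]
  have h1 : a * (1 - S.carr a) = 0 :=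
    (carr_iff S ha (one_sub_mem S (carr_mem S ha))).2 h0
  rw [mul_sub, mul_one] at h1
  exact (sub_eq_zero.mp h1).symm

lemma carr_mul {a : R} (ha : a ∈ S.carrier) : S.carr a * a = a := by
  have h1 : a * (1 - S.carr a) = 0 := by
    rw [mul_sub, mul_one, mul_carr S ha, sub_self]
  have h2 : (1 - S.carr a) * a = 0 :=
    comm_zero S ha (one_sub_mem S (carr_mem S ha)) h1
  rw [sub_mul, one_mul] at h2
  exact (sub_eq_zero.mp h2).symm

lemma carr_unique {x r : R} (hx : x ∈ S.carrier) (hr : r ∈ S.carrier) (hrr : r * r = r)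
    (hs : ∀ c ∈ S.carrier, (x * c = 0 ↔ r * c = 0)) : S.carr x = r := by
  have hpm := carr_mem S hx
  have h1r := one_sub_mem S hr
  have h1 : x * (1 - r) = 0 := (hs _ h1r).2 (by rw [mul_sub, mul_one, hrr, sub_self])
  have h2 : S.carr x * (1 - r) = 0 := (carr_iff S hx h1r).1 h1
  have h3 : (1 - r) * S.carr x = 0 := comm_zero S hpm h1r h2
  have h4 : x * (1 - S.carr x) = 0 := by
    rw [mul_sub, mul_one, mul_carr S hx, sub_self]
  have h5 : r * (1 - S.carr x) = 0 := (hs _ (one_sub_mem S hpm)).1 h4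
  rw [sub_mul, one_mul] at h3
  rw [mul_sub, mul_one] at h5
  rw [sub_eq_zero.mp h3]
  exact (sub_eq_zero.mp h5).symm

lemma proj_le_proj {q p : R} (hq : q ∈ S.carrier) (hqq : q*q = q)
    (hp : p ∈ S.carrier) (hpp : p*p = p)
    (h1 : q*p = q) (h2 : p*q = q) : S.le q p := by
  show p - q ∈ S.Pos
  have e : (p - q) * (p - q) = p - q := by
    rw [sub_mul, mul_sub, mul_sub, hpp, hqq, h1, h2]; abel
  exact e ▸ S.SA3 (sub_mem S hp hq)

lemma pos_key {s c : R} (hs : s ∈ S.Pos) (hc : c ∈ S.carrier)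
    (h : s * s * c = 0) : s * c = 0 := by
  have hsm : s ∈ S.carrier := S.pos_subset hs
  have hs2m : s * s ∈ S.carrier := sq_mem S hsm
  have h0 : c * (s*s) = 0 := comm_zero S hs2m hc h
  have h1 : c * (s*s) * c = 0 := by rw [h0, zero_mul]
  have h3 : s*c*s = 0 := by
    refine sq_zero S (quad_mem S hsm hc) ?_
    have e : (s*c*s)*(s*c*s) = s*(c*(s*s)*c)*s := by noncomm_ring
    rw [e, h1, mul_zero, zero_mul]
  have hu : s*c + c*s ∈ S.carrier := symm_mem S hsm hc
  have h4 : (s*c + c*s) * (s*c + c*s) = s*(c*c)*s := by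
    have e : (s*c + c*s) * (s*c + c*s)
        = (s*c*s)*c + s*(c*c)*s + c*(s*s)*c + c*(s*c*s) := by noncomm_ring
    rw [e, h3, h1]; simp
  have h5 : (s*c + c*s) * (s*(c*c)*s) = 0 := by
    have e : (s*c + c*s) * (s*(c*c)*s) = (s*c*s)*((c*c)*s) + (c*(s*s))*((c*c)*s) := by
      noncomm_ring
    rw [e, h3, h0]; simp
  have h8 : (s*c + c*s) * (s*c + c*s) = 0 := by
    refine sq_zero S (sq_mem S hu) ?_
    have e : ((s*c + c*s)*(s*c + c*s)) * ((s*c + c*s)*(s*c + c*s))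
        = ((s*c + c*s) * ((s*c + c*s)*(s*c + c*s))) * (s*c + c*s) := by noncomm_ring
    rw [e, h4, h5, zero_mul]
  have h9 : s*(c*c)*s = 0 := by rw [← h4, h8]
  have h10 := S.SA5 hsm (S.SA3 hc) h9
  have h11 : s*c + c*s = 0 := sq_zero S hu h8
  have h12 : c*s = -(s*c) := eq_neg_of_add_eq_zero_left (by rw [add_comm]; exact h11)
  have h13 : c*s*c = 0 := by
    have e : c*s*c = (c*s)*c := rfl
    rw [e, h12, neg_mul, mul_assoc, h10.1, neg_zero]
  exact (S.SA5 hc hs h13).2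

lemma carr_comm {a c : R} (ha : a ∈ S.carrier) (hc : c ∈ S.carrier)
    (hcm : c * a = a * c) : c * S.carr a = S.carr a * c := by
  obtain ⟨hpm, hpp, hspec⟩ := carr_spec S ha
  have h1m : (1:R) - S.carr a ∈ S.carrier := one_sub_mem S hpm
  have hap0 : a * (1 - S.carr a) = 0 := by
    rw [mul_sub, mul_one, mul_carr S ha, sub_self]
  have hdm : c * (1 - S.carr a) + (1 - S.carr a) * c ∈ S.carrier := symm_mem S hc h1m
  have had : a * (c * (1 - S.carr a) + (1 - S.carr a) * c) = 0 := by
    have e : a * (c * (1 - S.carr a) + (1 - S.carr a) * c)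
        = c * (a * (1 - S.carr a)) + (a * (1 - S.carr a)) * c
          + (a*c - c*a) * (1 - S.carr a) := by noncomm_ring
    rw [e, hap0, hcm, sub_self, zero_mul, mul_zero, zero_mul, add_zero, add_zero]
  have hpd : S.carr a * (c * (1 - S.carr a) + (1 - S.carr a) * c) = 0 :=
    (hspec _ hdm).1 had
  have hdp : (c * (1 - S.carr a) + (1 - S.carr a) * c) * S.carr a = 0 :=
    comm_zero S hpm hdm hpd
  have hpp0 : S.carr a * (1 - S.carr a) = 0 := by
    rw [mul_sub, mul_one, hpp, sub_self]
  have h0p : (1 - S.carr a) * S.carr a = 0 := by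
    rw [sub_mul, one_mul, hpp, sub_self]
  have e1 : S.carr a * c = S.carr a * (c * S.carr a) := by
    have e : S.carr a * (c * (1 - S.carr a) + (1 - S.carr a) * c)
        = (S.carr a * c - S.carr a * (c * S.carr a))
          + (S.carr a * (1 - S.carr a)) * c := by noncomm_ring
    rw [e, hpp0, zero_mul, add_zero] at hpd
    exact (sub_eq_zero.mp hpd)
  have e2 : c * S.carr a = S.carr a * (c * S.carr a) := by
    have e : (c * (1 - S.carr a) + (1 - S.carr a) * c) * S.carr a
        = (c * S.carr a - S.carr a * (c * S.carr a))
          + c * ((1 - S.carr a) * S.carr a) := by noncomm_ring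
    rw [e, h0p, mul_zero, add_zero] at hdp
    exact (sub_eq_zero.mp hdp)
  rw [e2, e1]

lemma key {x c : R} (hx : x ∈ S.carrier) (hc : c ∈ S.carrier)
    (h : x * x * c = 0) : x * c = 0 := by
  obtain ⟨s, hs, hscc, hss⟩ := S.SA6 (S.SA3 hx)
  have hsm : s ∈ S.carrier := S.pos_subset hs
  have hxs : x * s = s * x := hscc x hx (mul_assoc x x x).symm
  have hs2c : s * s * c = 0 := by rw [hss]; exact h
  have hsc : s * c = 0 := pos_key S hs hc hs2c
  have hpc : S.carr s * c = 0 := (carr_iff S hsm hc).1 hsc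
  have hxp : x * S.carr s = S.carr s * x := carr_comm S hsm hx hxs
  have hxpm : x * S.carr s ∈ S.carrier :=
    comm_mul_mem S hx (carr_mem S hsm) hxp
  have hsp : s * S.carr s = s := mul_carr S hsm
  have hx2p : (x*x) * S.carr s = x*x := by
    rw [← hss, mul_assoc, hsp]
  have hy0 : x - x * S.carr s = 0 := by
    refine sq_zero S (sub_mem S hx hxpm) ?_
    have c1 : x * S.carr s * x = x * x * S.carr s := by
      rw [mul_assoc, ← hxp, ← mul_assoc]
    have c2 : (x * S.carr s) * (x * S.carr s) = x * x * S.carr s := by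
      have e : (x * S.carr s) * (x * S.carr s) = (x * S.carr s * x) * S.carr s := by
        noncomm_ring
      rw [e, c1, mul_assoc, carr_idem S hsm]
    have e : (x - x * S.carr s) * (x - x * S.carr s)
        = (x*x - x*x*S.carr s) - (x * S.carr s * x - (x * S.carr s) * (x * S.carr s)) := by
      noncomm_ring
    rw [e, c1, c2, sub_self, sub_zero, hx2p, sub_self]
  have hxeq : x = x * S.carr s := sub_eq_zero.mp hy0
  rw [hxeq, mul_assoc, hpc, mul_zero]

lemma pow_mem {a : R} (ha : a ∈ S.carrier) : ∀ n : ℕ, a^(n+1) ∈ S.carrier := by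
  intro n
  induction n with
  | zero => simpa using ha
  | succ n ih =>
    rw [pow_succ]
    exact comm_mul_mem S ih ha (by rw [← pow_succ, ← pow_succ'])

lemma pow_zero_up {a c : R} (h : a * c = 0) (n : ℕ) : a^(n+1) * c = 0 := by
  rw [pow_succ, mul_assoc, h, mul_zero]

lemma pow_zero_down {a c : R} (ha : a ∈ S.carrier) (hc : c ∈ S.carrier) :
    ∀ n : ℕ, a^(n+1) * c = 0 → a * c = 0 := by
  intro n
  induction n with
  | zero => intro h; simpa using h
  | succ n ih =>
    intro h
    have h2 : a^(n+1) * a^(n+1) * c = 0 := by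
      have e : a^(n+1) * a^(n+1) = a^n * a^(n+1+1) := by
        rw [← pow_add, ← pow_add]; ring_nf
      rw [e, mul_assoc, h, mul_zero]
    exact ih (key S (pow_mem S ha n) hc h2)

end SynAux

/-- Theorem 2.11: properties of the carrier projection: (i) `a = 0 ↔ a° = 0`;
(ii) `a ∈ P ↔ a = a°`; (iii) `a°` is the smallest projection `p` with `a = ap`;
(iv) if `e ∈ E` then `e°` is the smallest projection `p` with `e ≤ p`;
(v) `ab = 0 ↔ ab° = 0 ↔ a°b° = 0`; (vi) `a° ∈ CC(a)`; (vii) `(aⁿ)° = a°` for `n ≥ 1`;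
(viii) `0 ≤ a ≤ b ⟹ a° ≤ b°`. -/
theorem stmt6 (S : SynapticAlgebra R) {a b : R} (ha : a ∈ S.carrier) (hb : b ∈ S.carrier) :
    (a = 0 ↔ S.carr a = 0) ∧
    (a * a = a ↔ a = S.carr a) ∧
    (a * S.carr a = a ∧ ∀ p, S.IsProj p → a * p = a → S.le (S.carr a) p) ∧
    (S.IsEff a → (S.le a (S.carr a) ∧ ∀ p, S.IsProj p → S.le a p → S.le (S.carr a) p)) ∧
    ((a * b = 0 ↔ a * S.carr b = 0) ∧ (a * S.carr b = 0 ↔ S.carr a * S.carr b = 0)) ∧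
    S.inCC a (S.carr a) ∧
    (∀ n : ℕ, 1 ≤ n → S.carr (a ^ n) = S.carr a) ∧
    (a ∈ S.Pos → S.le a b → S.le (S.carr a) (S.carr b)) := by
  have hcz : ∀ {x y : R}, x ∈ S.carrier → y ∈ S.carrier → x * y = 0 → y * x = 0 :=
    fun hx hy h => SynAux.comm_zero S hx hy h
  have hci : ∀ {x c : R}, x ∈ S.carrier → c ∈ S.carrier →
      (x * c = 0 ↔ S.carr x * c = 0) := fun hx hc => SynAux.carr_iff S hx hc
  have hcm : ∀ {x : R}, x ∈ S.carrier → S.carr x ∈ S.carrier :=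
    fun hx => SynAux.carr_mem S hx
  have hcid : ∀ {x : R}, x ∈ S.carrier → S.carr x * S.carr x = S.carr x :=
    fun hx => SynAux.carr_idem S hx
  have hosm : ∀ {x : R}, x ∈ S.carrier → (1:R) - x ∈ S.carrier :=
    fun hx => SynAux.one_sub_mem S hx
  refine ⟨?_, ?_, ⟨SynAux.mul_carr S ha, ?_⟩, ?_, ⟨?_, SynAux.carr_iff S ha (hcm hb)⟩,
    ⟨hcm ha, fun c hc hc2 => SynAux.carr_comm S ha hc hc2⟩, ?_, ?_⟩
  · -- (i)
    constructor
    · rintro rfl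
      have h0m : (0:R) ∈ S.carrier := S.pos_subset (SynAux.zero_pos S)
      have h1 : S.carr 0 * S.carr 0 = 0 := (hci h0m (hcm h0m)).1 (zero_mul _)
      rw [hcid h0m] at h1
      exact h1
    · intro h
      have h2 := SynAux.mul_carr S ha
      rw [h, mul_zero] at h2
      exact h2.symm
  · -- (ii)
    constructor
    · intro haa
      exact (SynAux.carr_unique S ha ha haa (fun c _ => Iff.rfl)).symm
    · intro h
      have h2 := hcid ha
      rw [← h] at h2
      exact h2
  · -- (iii) minimality
    intro p hp hap
    obtain ⟨hpm, hpp2⟩ := hp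
    have h0 : a * (1 - p) = 0 := by rw [mul_sub, mul_one, hap, sub_self]
    have h1 : S.carr a * (1 - p) = 0 := (hci ha (hosm hpm)).1 h0
    have h2 : (1 - p) * S.carr a = 0 := hcz (hcm ha) (hosm hpm) h1
    rw [mul_sub, mul_one] at h1
    rw [sub_mul, one_mul] at h2
    exact SynAux.proj_le_proj S (hcm ha) (hcid ha) hpm hpp2
      (sub_eq_zero.mp h1).symm (sub_eq_zero.mp h2).symm
  · -- (iv)
    rintro ⟨-, h0a, ha1⟩
    have hapos : a ∈ S.Pos := by simpa [SynapticAlgebra.le] using h0a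
    have h1a : (1:R) - a ∈ S.Pos := ha1
    have hppos : S.carr a ∈ S.Pos := hcid ha ▸ S.SA3 (hcm ha)
    have e2 : S.carr a * a * S.carr a = a := by
      rw [SynAux.carr_mul S ha, SynAux.mul_carr S ha]
    have heq : S.carr a * (1 - a) * S.carr a = S.carr a - a := by
      rw [mul_sub, mul_one, sub_mul, hcid ha, e2]
    constructor
    · show S.carr a - a ∈ S.Pos
      exact heq ▸ S.SA4 hppos h1a
    · intro r hr har
      obtain ⟨hrm, hrr⟩ := hr
      have h1rm : (1:R) - r ∈ S.carrier := hosm hrm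
      have h1rr : ((1:R) - r) * (1 - r) = 1 - r := by
        rw [sub_mul, one_mul, mul_sub, mul_one, hrr]; abel
      have h1rpos : (1:R) - r ∈ S.Pos := h1rr ▸ S.SA3 h1rm
      have hra : r - a ∈ S.Pos := har
      have hx : (1-r) * a * (1-r) ∈ S.Pos := S.SA4 h1rpos hapos
      have h1rr0 : ((1:R)-r) * r = 0 := by rw [sub_mul, one_mul, hrr, sub_self]
      have hy : ((1:R)-r) * (r - a) * (1-r) = -((1-r) * a * (1-r)) := by
        have e : ((1:R)-r) * (r - a) * (1-r)
            = ((1-r)*r)*(1-r) - (1-r)*a*(1-r) := by noncomm_ring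
        rw [e, h1rr0, zero_mul, zero_sub]
      have hx0 : ((1:R)-r) * a * (1-r) = 0 := S.pos_antisymm hx (hy ▸ S.SA4 h1rpos hra)
      have h5 := S.SA5 h1rm hapos hx0
      have h6 : S.carr a * (1-r) = 0 := (hci ha h1rm).1 h5.2
      have h7 : ((1:R)-r) * S.carr a = 0 := hcz (hcm ha) h1rm h6
      rw [mul_sub, mul_one] at h6
      rw [sub_mul, one_mul] at h7
      exact SynAux.proj_le_proj S (hcm ha) (hcid ha) hrm hrr
        (sub_eq_zero.mp h6).symm (sub_eq_zero.mp h7).symm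
  · -- (v) first
    constructor
    · intro h
      have hba : b * a = 0 := hcz ha hb h
      have h2 : S.carr b * a = 0 := (hci hb ha).1 hba
      exact hcz (hcm hb) ha h2
    · intro h
      have h2 : S.carr b * a = 0 := hcz ha (hcm hb) h
      have hba : b * a = 0 := (hci hb ha).2 h2
      exact hcz hb ha hba
  · -- (vii)
    intro n hn
    obtain ⟨m, rfl⟩ : ∃ m, n = m + 1 := ⟨n - 1, by omega⟩
    refine SynAux.carr_unique S (SynAux.pow_mem S ha m) (hcm ha) (hcid ha) ?_
    intro c hc
    constructor
    · intro h
      exact (hci ha hc).1 (SynAux.pow_zero_down S ha hc m h)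
    · intro h
      exact SynAux.pow_zero_up ((hci ha hc).2 h) m
  · -- (viii)
    intro hapos hab
    have hba : b - a ∈ S.Pos := hab
    have h1qm : (1:R) - S.carr b ∈ S.carrier := hosm (hcm hb)
    have h1qq : ((1:R) - S.carr b) * (1 - S.carr b) = 1 - S.carr b := by
      rw [sub_mul, one_mul, mul_sub, mul_one, hcid hb]; abel
    have h1qpos : (1:R) - S.carr b ∈ S.Pos := h1qq ▸ S.SA3 h1qm
    have hb0 : b * (1 - S.carr b) = 0 := by
      rw [mul_sub, mul_one, SynAux.mul_carr S hb, sub_self]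
    have hx : ((1:R)-S.carr b) * a * (1-S.carr b) ∈ S.Pos := S.SA4 h1qpos hapos
    have hy : ((1:R)-S.carr b) * (b - a) * (1-S.carr b)
        = -((1-S.carr b) * a * (1-S.carr b)) := by
      have e : ((1:R)-S.carr b)*(b-a)*(1-S.carr b)
          = (1-S.carr b)*(b*(1-S.carr b)) - (1-S.carr b)*a*(1-S.carr b) := by noncomm_ring
      rw [e, hb0, mul_zero, zero_sub]
    have hx0 : ((1:R)-S.carr b) * a * (1-S.carr b) = 0 :=
      S.pos_antisymm hx (hy ▸ S.SA4 h1qpos hba)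
    have h5 := S.SA5 h1qm hapos hx0
    have h6 : S.carr a * (1-S.carr b) = 0 := (hci ha h1qm).1 h5.2
    have h7 : ((1:R)-S.carr b) * S.carr a = 0 := hcz (hcm ha) h1qm h6
    rw [mul_sub, mul_one] at h6
    rw [sub_mul, one_mul] at h7
    exact SynAux.proj_le_proj S (hcm ha) (hcid ha) (hcm hb) (hcid hb)
      (sub_eq_zero.mp h6).symm (sub_eq_zero.mp h7).symm
end

section
/- If 0 ≤ a, 0 ≤ b are elements of A with aCb, then a² ≤ b² if and only if a ≤ b. -/
open SynapticAlgebra Filter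

variable {R : Type*} [Ring R] [Algebra ℝ R]

/-- If `a` commutes with `x` and `v` is a two-sided inverse of `x`, then `a` commutes
with `v`. -/
lemma comm_inv_aux {a x v : R} (hax : a * x = x * a) (h1 : x * v = 1) (h2 : v * x = 1) :
    a * v = v * a := by
  have : v * (a * x) * v = v * (x * a) * v := by rw [hax]
  calc a * v = v * x * a * v := by rw [h2, one_mul]
    _ = v * (x * a) * v := by noncomm_ring
    _ = v * (a * x) * v := by rw [hax]
    _ = v * a * (x * v) := by noncomm_ring
    _ = v * a := by rw [h1, mul_one]

/-- The inverse of an element of a synaptic algebra is positive. -/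
lemma inv_pos_aux (S : SynapticAlgebra R) {x v : R} (hx : x ∈ S.Pos) (hv : v ∈ S.carrier)
    (h1 : x * v = 1) (h2 : v * x = 1) : v ∈ S.Pos := by
  have hvv : v * v ∈ S.Pos := S.SA3 hv
  have hcomm : (v * v) * x = x * (v * v) := by
    calc (v * v) * x = v * (v * x) := by rw [mul_assoc]
      _ = v := by rw [h2, mul_one]
      _ = (x * v) * v := by rw [h1, one_mul]
      _ = x * (v * v) := by rw [mul_assoc]
  have hpos : (v * v) * x ∈ S.Pos := S.SA2 hvv hx hcomm
  have : (v * v) * x = v := by rw [mul_assoc, h2, mul_one]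
  rwa [this] at hpos

/-- If `0 ≤ x` and `x² ≤ 1` then `x ≤ 1`. -/
lemma sq_le_one_aux (S : SynapticAlgebra R) {x : R} (hx : x ∈ S.Pos)
    (h : 1 - x * x ∈ S.Pos) : 1 - x ∈ S.Pos := by
  have hxc : x ∈ S.carrier := S.pos_subset hx
  have h1x : (1 : R) + x ∈ S.carrier := S.add_mem S.one_mem hxc
  have hge : (1 : R) + x - 1 ∈ S.Pos := by simpa using hx
  obtain ⟨u, hu, hu1, hu2⟩ := S.SA8 h1x hge
  have hupos : u ∈ S.Pos := inv_pos_aux S (S.pos_add S.one_pos hx) hu hu1 hu2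
  have hxu : x * u = u * x := comm_inv_aux (by noncomm_ring) hu1 hu2
  have hcomm : u * (1 - x * x) = (1 - x * x) * u := by
    have : u * (x * x) = (x * x) * u := by
      calc u * (x * x) = (u * x) * x := by rw [mul_assoc]
        _ = (x * u) * x := by rw [hxu]
        _ = x * (u * x) := by rw [mul_assoc]
        _ = x * (x * u) := by rw [hxu]
        _ = (x * x) * u := by rw [mul_assoc]
    rw [mul_sub, sub_mul, mul_one, one_mul, this]
  have hres : u * (1 - x * x) ∈ S.Pos := S.SA2 hupos h hcomm
  have heq : u * (1 - x * x) = 1 - x := by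
    have hfac : (1 : R) - x * x = (1 + x) * (1 - x) := by noncomm_ring
    rw [hfac, ← mul_assoc, hu2, one_mul]
  rwa [heq] at hres

/-- For every `ε > 0`, `a ≤ b + ε` when `a, b ≥ 0` commute and `a² ≤ b²`. -/
lemma step_aux (S : SynapticAlgebra R) {a b : R} (ha : a ∈ S.Pos) (hb : b ∈ S.Pos)
    (hab : a * b = b * a) (hle : b * b - a * a ∈ S.Pos) {ε : ℝ} (hε : 0 < ε) :
    (b + ε • (1 : R)) - a ∈ S.Pos := by
  set b' := b + ε • (1 : R) with hb'def
  have hb'pos : b' ∈ S.Pos := S.pos_add hb (S.pos_smul hε.le S.one_pos)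
  have hb'c : b' ∈ S.carrier := S.pos_subset hb'pos
  -- invertibility of b'
  have hcC : (ε⁻¹ • b' : R) ∈ S.carrier := S.smul_mem _ hb'c
  have hc1 : (ε⁻¹ • b' : R) - 1 ∈ S.Pos := by
    have : (ε⁻¹ • b' : R) - 1 = ε⁻¹ • b := by
      rw [hb'def, smul_add, smul_smul, inv_mul_cancel₀ hε.ne', one_smul]
      abel
    rw [this]
    exact S.pos_smul (by positivity) hb
  obtain ⟨d, hd, hd1, hd2⟩ := S.SA8 hcC hc1
  set v := ε⁻¹ • d with hvdef
  have hv1 : b' * v = 1 := by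
    rw [hvdef, mul_smul_comm, ← smul_mul_assoc]
    exact hd1
  have hv2 : v * b' = 1 := by
    rw [hvdef, smul_mul_assoc, ← mul_smul_comm]
    exact hd2
  have hvc : v ∈ S.carrier := S.smul_mem _ hd
  have hvpos : v ∈ S.Pos := inv_pos_aux S hb'pos hvc hv1 hv2
  have hab' : a * b' = b' * a := by
    rw [hb'def, mul_add, add_mul, hab, mul_smul_comm, smul_mul_assoc, mul_one, one_mul]
  have hav : a * v = v * a := comm_inv_aux hab' hv1 hv2
  -- b'² - a² ≥ 0
  have hb'2 : b' * b' - a * a ∈ S.Pos := by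
    have hident : b' * b' - a * a
        = (b * b - a * a) + (ε • b + (ε • b + (ε * ε) • (1 : R))) := by
      rw [hb'def]
      simp only [mul_add, add_mul, mul_smul_comm, smul_mul_assoc, smul_smul, smul_add, mul_one, one_mul]
      abel
    rw [hident]
    exact S.pos_add hle (S.pos_add (S.pos_smul hε.le hb)
      (S.pos_add (S.pos_smul hε.le hb) (S.pos_smul (by positivity) S.one_pos)))
  have key : v * (b' * b' - a * a) * v ∈ S.Pos := S.SA4 hvpos hb'2
  have keyeq : v * (b' * b' - a * a) * v = 1 - (a * v) * (a * v) := by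
    have e1 : v * (b' * b') * v = 1 := by
      calc v * (b' * b') * v = (v * b') * (b' * v) := by noncomm_ring
        _ = 1 := by rw [hv1, hv2, one_mul]
    have e2 : v * (a * a) * v = (a * v) * (a * v) := by
      calc v * (a * a) * v = (v * a) * (a * v) := by noncomm_ring
        _ = (a * v) * (a * v) := by rw [hav]
    calc v * (b' * b' - a * a) * v = v * (b' * b') * v - v * (a * a) * v := by noncomm_ring
      _ = 1 - (a * v) * (a * v) := by rw [e1, e2]
  rw [keyeq] at key
  have hxpos : a * v ∈ S.Pos := S.SA2 ha hvpos hav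
  have honemx : 1 - a * v ∈ S.Pos := sq_le_one_aux S hxpos key
  have hfinal : b' * (1 - a * v) ∈ S.Pos := by
    refine S.SA2 hb'pos honemx ?_
    have e1 : b' * (a * v) = a := by
      calc b' * (a * v) = a * (b' * v) := by rw [← mul_assoc, ← hab', mul_assoc]
        _ = a := by rw [hv1, mul_one]
    have e2 : (a * v) * b' = a := by rw [mul_assoc, hv2, mul_one]
    rw [mul_sub, sub_mul, mul_one, one_mul, e1, e2]
  have : b' * (1 - a * v) = b' - a := by
    have e1 : b' * (a * v) = a := by
      calc b' * (a * v) = a * (b' * v) := by rw [← mul_assoc, ← hab', mul_assoc]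
        _ = a := by rw [hv1, mul_one]
    rw [mul_sub, mul_one, e1]
  rwa [this] at hfinal

/-- Corollary 3.4: if `0 ≤ a, b` commute, then `a² ≤ b² ↔ a ≤ b`. -/
theorem stmt8 (S : SynapticAlgebra R) {a b : R} (ha : a ∈ S.Pos) (hb : b ∈ S.Pos)
    (hab : a * b = b * a) :
    S.le (a * a) (b * b) ↔ S.le a b := by
  constructor
  · intro h
    show b - a ∈ S.Pos
    have hle : b * b - a * a ∈ S.Pos := h
    have hcab : a - b ∈ S.carrier := by
      rw [sub_eq_add_neg]
      exact S.add_mem (S.pos_subset ha) (S.neg_mem (S.pos_subset hb))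
    have harch : ∀ n : ℕ, (1 : R) - (n : ℝ) • (a - b) ∈ S.Pos := by
      intro n
      rcases Nat.eq_zero_or_pos n with hn | hn
      · simpa [hn] using S.one_pos
      · have hnpos : (0 : ℝ) < (n : ℝ) := by exact_mod_cast hn
        have hstep := step_aux S ha hb hab hle (ε := (n : ℝ)⁻¹) (by positivity)
        have := S.pos_smul hnpos.le hstep
        have heq : (n : ℝ) • (b + (n : ℝ)⁻¹ • (1 : R) - a) = 1 - (n : ℝ) • (a - b) := by
          rw [smul_sub, smul_add, smul_smul, mul_inv_cancel₀ hnpos.ne', one_smul, smul_sub]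
          abel
        rwa [heq] at this
    have := S.arch hcab S.one_mem harch
    rwa [neg_sub] at this
  · intro h
    show b * b - a * a ∈ S.Pos
    have hsum : b + a ∈ S.Pos := S.pos_add hb ha
    have hdiff : b - a ∈ S.Pos := h
    have hcomm : (b + a) * (b - a) = (b - a) * (b + a) := by
      rw [mul_sub, sub_mul, add_mul, mul_add, add_mul, mul_add, hab]
    have hprod : (b + a) * (b - a) ∈ S.Pos := S.SA2 hsum hdiff hcomm
    have heq : (b + a) * (b - a) = b * b - a * a := by
      rw [mul_sub, add_mul, add_mul, hab]
      abel
    rwa [heq] at hprod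
end

section
/- Let a, b ∈ A. Then: (i) ab = 0 if and only if |a|·|b| = 0; (ii) |a|° = a°. -/
open SynapticAlgebra Filter

variable {R : Type*} [Ring R] [Algebra ℝ R]


section Aux

variable {R : Type*} [Ring R] [Algebra ℝ R]

lemma SynapticAlgebra.sub_mem' (S : SynapticAlgebra R) {a b : R} (ha : a ∈ S.carrier)
    (hb : b ∈ S.carrier) : a - b ∈ S.carrier := by
  rw [sub_eq_add_neg]; exact S.add_mem ha (S.neg_mem hb)

lemma SynapticAlgebra.sq_zero' (S : SynapticAlgebra R) {x : R} (hx : x ∈ S.carrier)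
    (h : x * x = 0) : x = 0 := by
  have h1 : x * 1 * x = 0 := by rwa [mul_one]
  have h2 := (S.SA5 hx S.one_pos h1).1
  rwa [mul_one] at h2

lemma SynapticAlgebra.swap_pos' (S : SynapticAlgebra R) {x n : R} (hx : x ∈ S.carrier)
    (hn : n ∈ S.Pos) : x * n = 0 ↔ n * x = 0 := by
  constructor
  · intro h
    exact (S.SA5 hx hn (by rw [h, zero_mul])).2
  · intro h
    exact (S.SA5 hx hn (by rw [mul_assoc, h, mul_zero])).1

lemma SynapticAlgebra.conj_mem' (S : SynapticAlgebra R) {x e : R} (hx : x ∈ S.carrier)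
    (he : e ∈ S.Pos) : x * e * x ∈ S.carrier := by
  obtain ⟨n, hn⟩ := S.orderUnit hx
  set t : ℝ := (n : ℝ) with ht
  set k : R := t • (1 : R) - x with hk
  have hkP : k ∈ S.Pos := hn
  have hkc := S.pos_subset hkP
  have hec := S.pos_subset he
  have hxe : x = t • (1 : R) - k := by rw [hk, sub_sub_cancel]
  have key : x * e * x =
      (t * t) • e - t • ((k + e) * (k + e)) + t • (k * k) + t • (e * e) + k * e * k := by
    rw [hxe]
    simp only [sub_mul, mul_sub, add_mul, mul_add, smul_mul_assoc, mul_smul_comm,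
      one_mul, mul_one, smul_smul, smul_sub, smul_add]
    abel
  rw [key]
  exact S.add_mem (S.add_mem (S.add_mem (S.sub_mem' (S.smul_mem _ hec)
      (S.smul_mem _ (S.pos_subset (S.SA3 (S.add_mem hkc hec)))))
      (S.smul_mem _ (S.pos_subset (S.SA3 hkc)))) (S.smul_mem _ (S.pos_subset (S.SA3 hec))))
    (S.pos_subset (S.SA4 hkP he))

lemma SynapticAlgebra.ann_of_sq' (S : SynapticAlgebra R) {x e : R} (hx : x ∈ S.carrier)
    (he : e ∈ S.Pos) (h : x * x * e = 0) : x * e = 0 ∧ e * x = 0 := by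
  have hg : x * e * x ∈ S.carrier := S.conj_mem' hx he
  have h2 : (x * e * x) * (x * e * x) = (x * e) * ((x * x * e) * x) := by noncomm_ring
  rw [h, zero_mul, mul_zero] at h2
  exact S.SA5 hx he (S.sq_zero' hg h2)

lemma SynapticAlgebra.carr_spec' (S : SynapticAlgebra R) {a : R} (ha : a ∈ S.carrier) :
    S.carr a ∈ S.carrier ∧ S.carr a * S.carr a = S.carr a ∧
      ∀ b ∈ S.carrier, (a * b = 0 ↔ S.carr a * b = 0) := by
  have hc : S.carr a = Classical.choose (S.SA7 ha) := dif_pos ha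
  rw [hc]
  exact Classical.choose_spec (S.SA7 ha)

lemma SynapticAlgebra.abs_spec' (S : SynapticAlgebra R) {a : R} (ha : a ∈ S.carrier) :
    S.abs a ∈ S.Pos ∧ S.abs a * S.abs a = a * a := by
  have hP : a * a ∈ S.Pos := S.SA3 ha
  have hc : S.abs a = Classical.choose (S.SA6 hP) := dif_pos hP
  obtain ⟨h1, _, h3⟩ := Classical.choose_spec (S.SA6 hP)
  rw [hc]
  exact ⟨h1, h3⟩

lemma SynapticAlgebra.carr_sq' (S : SynapticAlgebra R) {x : R} (hx : x ∈ S.carrier) :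
    S.carr (x * x) = S.carr x := by
  have hx2 : x * x ∈ S.carrier := S.pos_subset (S.SA3 hx)
  obtain ⟨hpc, hpp, hp⟩ := S.carr_spec' hx
  obtain ⟨hqc, hqq, hq⟩ := S.carr_spec' hx2
  set p := S.carr x
  set q := S.carr (x * x)
  have h1mp : (1 : R) - p ∈ S.carrier := S.sub_mem' S.one_mem hpc
  have h1mq : (1 : R) - q ∈ S.carrier := S.sub_mem' S.one_mem hqc
  have hx1p : x * (1 - p) = 0 := (hp _ h1mp).2 (by rw [mul_sub, mul_one, hpp, sub_self])
  have hxx1p : (x * x) * (1 - p) = 0 := by rw [mul_assoc, hx1p, mul_zero]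
  have hq1p : q * (1 - p) = 0 := (hq _ h1mp).1 hxx1p
  have hqp : q * p = q := by
    rw [mul_sub, mul_one] at hq1p
    exact (sub_eq_zero.mp hq1p).symm
  have hxx1q : (x * x) * (1 - q) = 0 := (hq _ h1mq).2 (by rw [mul_sub, mul_one, hqq, sub_self])
  have h1qP : (1 : R) - q ∈ S.Pos := by
    have hsq : ((1 : R) - q) * ((1 : R) - q) = 1 - q := by
      have h0 : ((1 : R) - q) * ((1 : R) - q) = 1 - q - q + q * q := by noncomm_ring
      rw [h0, hqq]; abel
    have := S.SA3 h1mq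
    rwa [hsq] at this
  have hx1q : x * (1 - q) = 0 := (S.ann_of_sq' hx h1qP hxx1q).1
  have hp1q : p * (1 - q) = 0 := (hp _ h1mq).1 hx1q
  have hpq : p * q = p := by
    rw [mul_sub, mul_one] at hp1q
    exact (sub_eq_zero.mp hp1q).symm
  have key : (q - p) * (q - p) = 0 := by
    have h4 : (q - p) * (q - p) = q * q - q * p - p * q + p * p := by noncomm_ring
    rw [hqq, hqp, hpq, hpp] at h4
    rw [h4]; abel
  exact sub_eq_zero.mp (S.sq_zero' (S.sub_mem' hqc hpc) key)

end Aux

/-- Corollary 3.7: (i) `ab = 0 ↔ |a||b| = 0`; (ii) `|a|° = a°`. -/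
theorem stmt10 (S : SynapticAlgebra R) {a b : R} (ha : a ∈ S.carrier) (hb : b ∈ S.carrier) :
    (a * b = 0 ↔ S.abs a * S.abs b = 0) ∧
    (S.carr (S.abs a) = S.carr a)  := by
  obtain ⟨habsaP, habsa2⟩ := S.abs_spec' ha
  obtain ⟨habsbP, habsb2⟩ := S.abs_spec' hb
  have hac : S.abs a ∈ S.carrier := S.pos_subset habsaP
  have hbc : S.abs b ∈ S.carrier := S.pos_subset habsbP
  have hii : S.carr (S.abs a) = S.carr a := by
    calc S.carr (S.abs a) = S.carr (S.abs a * S.abs a) := (S.carr_sq' hac).symm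
      _ = S.carr (a * a) := by rw [habsa2]
      _ = S.carr a := S.carr_sq' ha
  have hiib : S.carr (S.abs b) = S.carr b := by
    calc S.carr (S.abs b) = S.carr (S.abs b * S.abs b) := (S.carr_sq' hbc).symm
      _ = S.carr (b * b) := by rw [habsb2]
      _ = S.carr b := S.carr_sq' hb
  refine ⟨?_, hii⟩
  obtain ⟨hpc, hpp, hp⟩ := S.carr_spec' ha
  have hpPos : S.carr a ∈ S.Pos := by
    have := S.SA3 hpc
    rwa [hpp] at this
  obtain ⟨_, _, hpb⟩ := S.carr_spec' hb
  obtain ⟨_, _, hpab⟩ := S.carr_spec' hac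
  obtain ⟨_, _, hpbb⟩ := S.carr_spec' hbc
  calc a * b = 0 ↔ S.carr a * b = 0 := hp b hb
    _ ↔ b * S.carr a = 0 := (S.swap_pos' hb hpPos).symm
    _ ↔ S.carr b * S.carr a = 0 := hpb _ hpc
    _ ↔ S.abs b * S.carr a = 0 := by rw [← hiib]; exact (hpbb _ hpc).symm
    _ ↔ S.carr a * S.abs b = 0 := S.swap_pos' hbc hpPos
    _ ↔ S.abs a * S.abs b = 0 := by rw [← hii]; exact (hpab _ hbc).symm
end

section
/- If a ∈ A, then the quadratic mapping J_a : A → A, J_a(b) := aba, is both linear and order preserving; in particular, for every b ∈ A with 0 ≤ b and every a ∈ A (not necessarily 0 ≤ a), 0 ≤ aba. -/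
open SynapticAlgebra Filter

variable {R : Type*} [Ring R] [Algebra ℝ R]

section Aux

variable {R : Type*} [Ring R] [Algebra ℝ R]

lemma SynapticAlgebra.sub_mem'_s11 (S : SynapticAlgebra R) {x y : R} (hx : x ∈ S.carrier)
    (hy : y ∈ S.carrier) : x - y ∈ S.carrier := by
  have := S.add_mem hx (S.neg_mem hy); simpa [sub_eq_add_neg] using this

lemma SynapticAlgebra.sq_mem' (S : SynapticAlgebra R) {x : R} (hx : x ∈ S.carrier) :
    x * x ∈ S.carrier := S.pos_subset (S.SA3 hx)

lemma SynapticAlgebra.circ_mem' (S : SynapticAlgebra R) {x y : R} (hx : x ∈ S.carrier)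
    (hy : y ∈ S.carrier) : x * y + y * x ∈ S.carrier := by
  have h : x * y + y * x = (x + y) * (x + y) - x * x - y * y := by noncomm_ring
  rw [h]
  exact S.sub_mem'_s11 (S.sub_mem'_s11 (S.sq_mem' (S.add_mem hx hy)) (S.sq_mem' hx)) (S.sq_mem' hy)

lemma SynapticAlgebra.halfd (S : SynapticAlgebra R) {x y : R} (h : x + x = y) :
    x = (2⁻¹ : ℝ) • y := by
  rw [← h, ← two_smul ℝ x, smul_smul]; norm_num

lemma SynapticAlgebra.triple_mem (S : SynapticAlgebra R) {a b : R} (ha : a ∈ S.carrier)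
    (hb : b ∈ S.carrier) : a * b * a ∈ S.carrier := by
  have hc : a * b + b * a ∈ S.carrier := S.circ_mem' ha hb
  have key : a * b * a = (2⁻¹ : ℝ) •
      ((a * (a * b + b * a) + (a * b + b * a) * a) - ((a * a) * b + b * (a * a))) :=
    S.halfd (by noncomm_ring)
  rw [key]
  exact S.smul_mem _ (S.sub_mem'_s11 (S.circ_mem' ha hc) (S.circ_mem' (S.sq_mem' ha) hb))

lemma SynapticAlgebra.Jpos (S : SynapticAlgebra R) {a b : R} (ha : a ∈ S.carrier)
    (hb : b ∈ S.Pos) : a * b * a ∈ S.Pos := by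
  have key : ∀ n : ℕ, (n : ℝ) • (a * b * a) + a * a ∈ S.Pos := by
    intro n
    set e : R := (n : ℝ) • b + 1 with he
    have he_pos : e ∈ S.Pos := S.pos_add (S.pos_smul n.cast_nonneg hb) S.one_pos
    have he_carrier : e ∈ S.carrier := S.pos_subset he_pos
    have he1 : e - 1 ∈ S.Pos := by
      have : e - 1 = (n : ℝ) • b := by rw [he]; abel
      rw [this]; exact S.pos_smul n.cast_nonneg hb
    obtain ⟨s, hs_pos, hs_comm, hss⟩ := S.SA6 he_pos
    have hs_carrier : s ∈ S.carrier := S.pos_subset hs_pos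
    obtain ⟨v, hv_carrier, hev, hve⟩ := S.SA8 he_carrier he1
    have hsv : v * s = s * v := hs_comm v hv_carrier (by rw [hve, hev])
    set w : R := s * v with hw
    have hsw : s * w = 1 := by rw [hw, ← mul_assoc, hss, hev]
    have hws : w * s = 1 := by rw [hw, mul_assoc, hsv, ← mul_assoc, hss, hev]
    have hw_carrier : w ∈ S.carrier := by
      have : w = (2⁻¹ : ℝ) • (s * v + v * s) := S.halfd (by rw [hw, hsv])
      rw [this]; exact S.smul_mem _ (S.circ_mem' hs_carrier hv_carrier)
    have hwcomm : s * w = w * s := by rw [hsw, hws]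
    have hw_pos : w ∈ S.Pos := by
      have h1 : w * w * s = w := by rw [mul_assoc, hws, mul_one]
      have h2 : w * w * s = s * (w * w) := by
        rw [mul_assoc, hws, mul_one, ← mul_assoc, hsw, one_mul]
      have := S.SA2 (S.SA3 hw_carrier) hs_pos h2
      rwa [h1] at this
    have hsas : s * a * s ∈ S.carrier := S.triple_mem hs_carrier ha
    have h1 : (s * a * s) * (s * a * s) ∈ S.Pos := S.SA3 hsas
    have h2 : (s * a * s) * (s * a * s) = s * (a * e * a) * s := by
      rw [← hss]; noncomm_ring
    rw [h2] at h1
    have h3 : w * (s * (a * e * a) * s) * w ∈ S.Pos := S.SA4 hw_pos h1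
    have h4 : w * (s * (a * e * a) * s) * w = a * e * a := by
      have : w * (s * (a * e * a) * s) * w = (w * s) * (a * e * a) * (s * w) := by
        noncomm_ring
      rw [this, hws, hsw, one_mul, mul_one]
    rw [h4] at h3
    have h5 : a * e * a = (n : ℝ) • (a * b * a) + a * a := by
      rw [he, mul_add, add_mul, mul_one, mul_smul_comm, smul_mul_assoc]
    rwa [h5] at h3
  have harch : -(-(a * b * a)) ∈ S.Pos := by
    refine S.arch (S.neg_mem (S.triple_mem ha (S.pos_subset hb))) (S.sq_mem' ha) ?_
    intro n
    have : a * a - (n : ℝ) • (-(a * b * a)) = (n : ℝ) • (a * b * a) + a * a := by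
      rw [smul_neg]; abel
    rw [this]; exact key n
  rwa [neg_neg] at harch

end Aux

/-- Theorem 4.2: the quadratic mapping `J_a(b) = aba` maps `A` to `A`, is linear,
and is order preserving; in particular `0 ≤ b ⟹ 0 ≤ aba` for every `a ∈ A`. -/
theorem stmt11 (S : SynapticAlgebra R) {a : R} (ha : a ∈ S.carrier) :
    (∀ b ∈ S.carrier, a * b * a ∈ S.carrier) ∧
    (∀ b c : R, a * (b + c) * a = a * b * a + a * c * a) ∧
    (∀ (t : ℝ) (b : R), a * (t • b) * a = t • (a * b * a)) ∧
    (∀ b c : R, b ∈ S.carrier → c ∈ S.carrier → S.le b c → S.le (a * b * a) (a * c * a)) ∧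
    (∀ b : R, b ∈ S.Pos → a * b * a ∈ S.Pos) := by
  refine ⟨fun b hb => S.triple_mem ha hb, fun b c => by noncomm_ring,
    fun t b => by rw [mul_smul_comm, smul_mul_assoc], ?_, fun b hb => S.Jpos ha hb⟩
  intro b c _ _ hle
  have h : a * c * a - a * b * a = a * (c - b) * a := by noncomm_ring
  show a * c * a - a * b * a ∈ S.Pos
  rw [h]
  exact S.Jpos ha hle
end
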